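/- arXiv:1609.07358 — 12 statements merged into one kernel-verified Lean document; each statement's English description precedes it below -/
import Mathlib

section
/- Let θ0 ∈ (0,1] and let θ : ℕ → ℝ satisfy θ_0 = θ0 and θ_{k+1} = (√(θ_k⁴ + 4θ_k²) − θ_k²)/2 for all k ≥ 0. Then for every k ≥ 0 one has 1/(k + 1/θ0) ≤ θ_k ≤ 2/(k + 2/θ0). -/
/-!
With `u = 1/θ_k` and `v = 1/θ_{k+1}`, the defining equation `θ_{k+1}² + θ_k² θ_{k+1} = θ_k²`
becomes `v² - u² = v`, i.e. `v - u = v / (v + u)`. Since `0 < u < v`, this increment lies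
in `(1/2, 1)`, so `1/θ0 + k/2 ≤ 1/θ_k ≤ 1/θ0 + k`, which is the claim after inverting.
-/

noncomputable def nextTheta (x : ℝ) : ℝ := (Real.sqrt (x ^ 4 + 4 * x ^ 2) - x ^ 2) / 2

lemma nextTheta_sq_add_mul (x : ℝ) : nextTheta x ^ 2 + x ^ 2 * nextTheta x = x ^ 2 := by
  have hs : Real.sqrt (x ^ 4 + 4 * x ^ 2) ^ 2 = x ^ 4 + 4 * x ^ 2 :=
    Real.sq_sqrt (by positivity)
  unfold nextTheta
  linear_combination hs / 4

lemma nextTheta_pos {x : ℝ} (hx : 0 < x) : 0 < nextTheta x := by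
  have h : x ^ 2 < Real.sqrt (x ^ 4 + 4 * x ^ 2) :=
    (Real.lt_sqrt (sq_nonneg x)).2 (by nlinarith [pow_pos hx 2])
  unfold nextTheta
  linarith

lemma inv_nextTheta_sq_sub_inv_sq {x : ℝ} (hx : 0 < x) :
    (nextTheta x)⁻¹ ^ 2 - x⁻¹ ^ 2 = (nextTheta x)⁻¹ := by
  have hy := nextTheta_pos hx
  have h := nextTheta_sq_add_mul x
  field_simp
  linear_combination -h

lemma sub_mem_Ioo_of_sq_sub_sq_eq {u v : ℝ} (hu : 0 < u) (hv : 0 < v) (h : v ^ 2 - u ^ 2 = v) :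
    v - u ∈ Set.Ioo (1 / 2) 1 := by
  have huv : u < v := by nlinarith
  constructor <;> nlinarith

lemma pos_of_rec_nextTheta {θ : ℕ → ℝ} (hθ0 : 0 < θ 0)
    (hrec : ∀ k, θ (k + 1) = nextTheta (θ k)) (k : ℕ) : 0 < θ k := by
  induction k with
  | zero => exact hθ0
  | succ k ih => exact hrec k ▸ nextTheta_pos ih

lemma inv_mem_Icc_of_rec_nextTheta {θ : ℕ → ℝ} (hθ0 : 0 < θ 0)
    (hrec : ∀ k, θ (k + 1) = nextTheta (θ k)) (k : ℕ) :
    (θ k)⁻¹ ∈ Set.Icc ((θ 0)⁻¹ + k / 2) ((θ 0)⁻¹ + k) := by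
  induction k with
  | zero => simp
  | succ k ih =>
    have hk := pos_of_rec_nextTheta hθ0 hrec k
    obtain ⟨hlo, hhi⟩ := sub_mem_Ioo_of_sq_sub_sq_eq (inv_pos.2 hk)
      (inv_pos.2 (nextTheta_pos hk)) (inv_nextTheta_sq_sub_inv_sq hk)
    rw [hrec k]
    push_cast
    constructor <;> linarith [ih.1, ih.2, hlo, hhi]

theorem stmt_2_general (θ0 : ℝ) (hθ0pos : 0 < θ0)
    (θ : ℕ → ℝ) (hinit : θ 0 = θ0)
    (hrec : ∀ k : ℕ, θ (k + 1) = (Real.sqrt ((θ k) ^ 4 + 4 * (θ k) ^ 2) - (θ k) ^ 2) / 2) :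
    ∀ k : ℕ, 1 / ((k : ℝ) + 1 / θ0) ≤ θ k ∧ θ k ≤ 2 / ((k : ℝ) + 2 / θ0) := by
  intro k
  subst hinit
  have hk := pos_of_rec_nextTheta hθ0pos hrec k
  obtain ⟨hlo, hhi⟩ := inv_mem_Icc_of_rec_nextTheta hθ0pos hrec k
  have hlower : 1 / ((k : ℝ) + 1 / θ 0) = ((θ 0)⁻¹ + k)⁻¹ := by rw [one_div, one_div, add_comm]
  have hupper : 2 / ((k : ℝ) + 2 / θ 0) = ((θ 0)⁻¹ + k / 2)⁻¹ := by
    field_simp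
    ring
  rw [hlower, hupper, ← inv_inv (θ k)]
  exact ⟨inv_anti₀ (inv_pos.2 hk) hhi, inv_anti₀ (by positivity) hlo⟩

theorem stmt_2 (θ0 : ℝ) (hθ0pos : 0 < θ0) (hθ0le : θ0 ≤ 1)
    (θ : ℕ → ℝ) (hinit : θ 0 = θ0)
    (hrec : ∀ k : ℕ, θ (k + 1) = (Real.sqrt ((θ k) ^ 4 + 4 * (θ k) ^ 2) - (θ k) ^ 2) / 2) :
    ∀ k : ℕ, 1 / ((k : ℝ) + 1 / θ0) ≤ θ k ∧ θ k ≤ 2 / ((k : ℝ) + 2 / θ0) :=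
  stmt_2_general θ0 hθ0pos θ hinit hrec
end

section
/- The FISTA iterates satisfy, for every k ≥ 1, (1/θ_{k−1}²)·(F(x_k) − F(x_*)) + (1/2)·‖z_k − x_*‖_v² ≤ (1/2)·‖x_0 − x_*‖_v². -/
/-!
With `u = (1 - θₖ) xₖ + θₖ x⋆` one has `u - yₖ = θₖ (x⋆ - zₖ)` and `u - xₖ₊₁ = θₖ (x⋆ - zₖ₊₁)`.
Chaining the descent inequality at `yₖ`, the three-point property of the proximal step
tested at `u`, the gradient inequality of `f` at `yₖ` and convexity of `F` at `u` gives
`F(xₖ₊₁) - F(x⋆) + θₖ²/2 ‖zₖ₊₁ - x⋆‖ᵥ² ≤ (1 - θₖ)(F(xₖ) - F(x⋆)) + θₖ²/2 ‖zₖ - x⋆‖ᵥ²`.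
After division by `θₖ²`, the identity `(1 - θₖ₊₁)/θₖ₊₁² = 1/θₖ²` lets these bounds telescope
down to `θ₀ = 1`, `z₀ = x₀`.
-/

open scoped RealInnerProductSpace
open Set Filter Topology

lemma le_of_forall_le_add_mul {a b c : ℝ} (h : ∀ t : ℝ, 0 < t → t ≤ 1 → a ≤ b + t * c) :
    a ≤ b := by
  have hcont : Continuous fun t : ℝ => b + t * c := by fun_prop
  have hlim : Tendsto (fun t : ℝ => b + t * c) (𝓝[>] 0) (𝓝 b) := by
    simpa using (hcont.tendsto 0).mono_left nhdsWithin_le_nhds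
  exact ge_of_tendsto hlim <| by
    filter_upwards [Ioc_mem_nhdsGT one_pos] with t ht using h t ht.1 ht.2

theorem ConvexOn.apply_sub_le_of_hasFDerivAt {E : Type*} [NormedAddCommGroup E] [NormedSpace ℝ E]
    {s : Set E} {f : E → ℝ} {f' : E →L[ℝ] ℝ} {x y : E} (hf : ConvexOn ℝ s f)
    (hx : x ∈ s) (hy : y ∈ s) (hf' : HasFDerivAt f f' x) :
    f' (y - x) ≤ f y - f x := by
  let ℓ : ℝ →ᵃ[ℝ] E := AffineMap.lineMap x y
  have hℓ : HasFDerivAt f f' (ℓ 0) := by simpa [ℓ] using hf'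
  have h := (hf.comp_affineMap ℓ).le_slope_of_hasDerivAt (x := 0) (y := 1)
    (by simpa [ℓ] using hx) (by simpa [ℓ] using hy) one_pos
    (hℓ.comp_hasDerivAt 0 AffineMap.hasDerivAt_lineMap)
  simpa [slope_def_field, ℓ] using h

section WeightedSq

variable {ι : Type*} [Fintype ι] (v : ι → ℝ)

def weightedSq (h : EuclideanSpace ℝ ι) : ℝ := ∑ i, v i * h i ^ 2

lemma weightedSq_smul (c : ℝ) (h : EuclideanSpace ℝ ι) :
    weightedSq v (c • h) = c ^ 2 * weightedSq v h := by
  simp only [weightedSq, Finset.mul_sum, PiLp.smul_apply, smul_eq_mul]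
  exact Finset.sum_congr rfl fun i _ => by ring

lemma weightedSq_sub_comm (a b : EuclideanSpace ℝ ι) :
    weightedSq v (a - b) = weightedSq v (b - a) :=
  Finset.sum_congr rfl fun i _ => by simp only [PiLp.sub_apply]; ring

lemma weightedSq_convex_comb (t : ℝ) (a b : EuclideanSpace ℝ ι) :
    weightedSq v ((1 - t) • a + t • b)
      = (1 - t) * weightedSq v a + t * weightedSq v b - t * (1 - t) * weightedSq v (a - b) := by
  simp only [weightedSq, Finset.mul_sum, ← Finset.sum_sub_distrib, ← Finset.sum_add_distrib]
  refine Finset.sum_congr rfl fun i _ => ?_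
  simp only [PiLp.add_apply, PiLp.smul_apply, PiLp.sub_apply, smul_eq_mul]
  ring

theorem ConvexOn.prox_three_point {φ : EuclideanSpace ℝ ι → ℝ}
    (hφ : ConvexOn ℝ univ φ) {y p : EuclideanSpace ℝ ι}
    (hp : ∀ u, φ p + 1 / 2 * weightedSq v (p - y) ≤ φ u + 1 / 2 * weightedSq v (u - y))
    (u : EuclideanSpace ℝ ι) :
    φ p + 1 / 2 * weightedSq v (p - y) + 1 / 2 * weightedSq v (u - p)
      ≤ φ u + 1 / 2 * weightedSq v (u - y) := by
  refine le_of_forall_le_add_mul (c := 1 / 2 * weightedSq v (u - p)) fun t ht0 ht1 => ?_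
  have hmin := hp ((1 - t) • p + t • u)
  have hconv := hφ.2 (mem_univ p) (mem_univ u) (sub_nonneg.2 ht1) ht0.le (by ring)
  rw [show (1 - t) • p + t • u - y = (1 - t) • (p - y) + t • (u - y) by module,
    weightedSq_convex_comb, show p - y - (u - y) = p - u by module,
    weightedSq_sub_comm v p u] at hmin
  simp only [smul_eq_mul] at hconv
  refine le_of_mul_le_mul_left ?_ ht0
  nlinarith

theorem fista_step {f ψ : EuclideanSpace ℝ ι → ℝ} (hf : ConvexOn ℝ univ f)
    (hψ : ConvexOn ℝ univ ψ) {x z y x' z' xstar gy : EuclideanSpace ℝ ι} {θ : ℝ}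
    (hθ0 : 0 < θ) (hθ1 : θ ≤ 1) (hgrad : HasGradientAt f gy y)
    (hdesc : ∀ h, f (y + h) ≤ f y + ⟪gy, h⟫ + 1 / 2 * weightedSq v h)
    (hy : y = (1 - θ) • x + θ • z)
    (hx' : ∀ u, ⟪gy, x' - y⟫ + 1 / 2 * weightedSq v (x' - y) + ψ x'
      ≤ ⟪gy, u - y⟫ + 1 / 2 * weightedSq v (u - y) + ψ u)
    (hz' : z' = z + θ⁻¹ • (x' - y)) :
    (f + ψ) x' - (f + ψ) xstar + θ ^ 2 * (1 / 2 * weightedSq v (z' - xstar))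
      ≤ (1 - θ) * ((f + ψ) x - (f + ψ) xstar) + θ ^ 2 * (1 / 2 * weightedSq v (z - xstar)) := by
  set u := (1 - θ) • x + θ • xstar
  have hu_y : u - y = θ • (xstar - z) := by rw [hy]; module
  have hu_x' : u - x' = θ • (xstar - z') := by
    rw [hz', smul_sub, smul_add, smul_smul, mul_inv_cancel₀ hθ0.ne', one_smul, hy]; module
  have hlin : ConvexOn ℝ univ fun u => ⟪gy, u - y⟫ + ψ u := by
    refine (((innerₛₗ ℝ gy).convexOn convex_univ).add_const (-⟪gy, y⟫)).add hψ |>.congr ?_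
    intro w _
    simp only [Pi.add_apply, innerₛₗ_apply_apply, inner_sub_right]
    ring
  have hprox := hlin.prox_three_point v (y := y) (p := x') (fun w => by linarith [hx' w]) u
  have hdescent := hdesc (x' - y)
  rw [add_sub_cancel] at hdescent
  have hgradient := hf.apply_sub_le_of_hasFDerivAt (mem_univ y) (mem_univ u) hgrad.hasFDerivAt
  have hf_u : f u ≤ (1 - θ) • f x + θ • f xstar :=
    hf.2 (mem_univ x) (mem_univ xstar) (sub_nonneg.2 hθ1) hθ0.le (by ring)
  have hψ_u : ψ u ≤ (1 - θ) • ψ x + θ • ψ xstar :=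
    hψ.2 (mem_univ x) (mem_univ xstar) (sub_nonneg.2 hθ1) hθ0.le (by ring)
  rw [hu_y, hu_x', weightedSq_smul, weightedSq_smul, weightedSq_sub_comm v xstar,
    weightedSq_sub_comm v xstar, real_inner_smul_right] at hprox
  simp only [InnerProductSpace.toDual_apply_apply, hu_y, real_inner_smul_right] at hgradient
  simp only [smul_eq_mul] at hf_u hψ_u
  simp only [Pi.add_apply]
  linarith

end WeightedSq

noncomputable def fistaTheta (a : ℝ) : ℝ := (Real.sqrt (a ^ 4 + 4 * a ^ 2) - a ^ 2) / 2

lemma fistaTheta_sq (a : ℝ) : fistaTheta a ^ 2 = a ^ 2 * (1 - fistaTheta a) := by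
  have hs : Real.sqrt (a ^ 4 + 4 * a ^ 2) ^ 2 = a ^ 4 + 4 * a ^ 2 :=
    Real.sq_sqrt (by positivity)
  unfold fistaTheta
  linear_combination hs / 4

lemma fistaTheta_pos {a : ℝ} (ha : a ≠ 0) : 0 < fistaTheta a := by
  have hlt : a ^ 2 < Real.sqrt (a ^ 4 + 4 * a ^ 2) :=
    Real.lt_sqrt_of_sq_lt (by nlinarith [sq_pos_of_ne_zero ha])
  unfold fistaTheta
  linarith

lemma fistaTheta_le_one (a : ℝ) : fistaTheta a ≤ 1 := by
  nlinarith [fistaTheta_sq a, sq_nonneg (fistaTheta a), sq_nonneg a]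

theorem fista_telescope {θ a b : ℕ → ℝ} (hθ0 : θ 0 = 1) (hθpos : ∀ k, 0 < θ k)
    (hθ : ∀ k, θ (k + 1) ^ 2 = θ k ^ 2 * (1 - θ (k + 1)))
    (hstep : ∀ k, a (k + 1) + θ k ^ 2 * b (k + 1) ≤ (1 - θ k) * a k + θ k ^ 2 * b k) :
    ∀ k, 1 / θ k ^ 2 * a (k + 1) + b (k + 1) ≤ b 0 := by
  have hdiv : ∀ k, 1 / θ k ^ 2 * a (k + 1) + b (k + 1) ≤ (1 - θ k) / θ k ^ 2 * a k + b k := by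
    intro k
    have hθk := pow_pos (hθpos k) 2
    calc 1 / θ k ^ 2 * a (k + 1) + b (k + 1)
        = (a (k + 1) + θ k ^ 2 * b (k + 1)) / θ k ^ 2 := by
          rw [add_div, mul_div_cancel_left₀ _ hθk.ne']; ring
      _ ≤ ((1 - θ k) * a k + θ k ^ 2 * b k) / θ k ^ 2 :=
          div_le_div_of_nonneg_right (hstep k) hθk.le
      _ = (1 - θ k) / θ k ^ 2 * a k + b k := by
          rw [add_div, mul_div_cancel_left₀ _ hθk.ne']; ring
  intro k
  induction k with
  | zero => simpa [hθ0] using hdiv 0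
  | succ k ih =>
    have hcoef : (1 - θ (k + 1)) / θ (k + 1) ^ 2 = 1 / θ k ^ 2 := by
      rw [div_eq_div_iff (pow_pos (hθpos _) 2).ne' (pow_pos (hθpos _) 2).ne']
      linear_combination -hθ k
    exact (hdiv (k + 1)).trans (hcoef ▸ ih)

theorem stmt_4_general {n : ℕ}
    (v : Fin n → ℝ)
    (f ψ F : EuclideanSpace ℝ (Fin n) → ℝ)
    (g : EuclideanSpace ℝ (Fin n) → EuclideanSpace ℝ (Fin n))
    (hfconv : ConvexOn ℝ Set.univ f)
    (hgrad : ∀ x, HasGradientAt f (g x) x)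
    (hdesc : ∀ x h : EuclideanSpace ℝ (Fin n),
      f (x + h) ≤ f x + ⟪g x, h⟫ + (1 / 2) * ∑ i, v i * (h i) ^ 2)
    (hψconv : ConvexOn ℝ Set.univ ψ)
    (hF : ∀ x, F x = f x + ψ x)
    (xstar : EuclideanSpace ℝ (Fin n))
    (x y z : ℕ → EuclideanSpace ℝ (Fin n)) (θ : ℕ → ℝ)
    (hθinit : θ 0 = 1) (hzinit : z 0 = x 0)
    (hy : ∀ k, y k = (1 - θ k) • x k + θ k • z k)
    (hxmin : ∀ k, ∀ u : EuclideanSpace ℝ (Fin n),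
      ⟪g (y k), x (k + 1) - y k⟫ + (1 / 2) * (∑ i, v i * ((x (k + 1) - y k) i) ^ 2)
          + ψ (x (k + 1))
        ≤ ⟪g (y k), u - y k⟫ + (1 / 2) * (∑ i, v i * ((u - y k) i) ^ 2) + ψ u)
    (hz : ∀ k, z (k + 1) = z k + (θ k)⁻¹ • (x (k + 1) - y k))
    (hθrec : ∀ k : ℕ, θ (k + 1) = (Real.sqrt ((θ k) ^ 4 + 4 * (θ k) ^ 2) - (θ k) ^ 2) / 2) :
    ∀ k : ℕ, 1 ≤ k →
      (1 / (θ (k - 1)) ^ 2) * (F (x k) - F xstar)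
          + (1 / 2) * ∑ i, v i * ((z k - xstar) i) ^ 2
        ≤ (1 / 2) * ∑ i, v i * ((x 0 - xstar) i) ^ 2 := by
  obtain rfl : F = f + ψ := funext hF
  have hθpos : ∀ k, 0 < θ k := by
    intro k
    induction k with
    | zero => simp [hθinit]
    | succ k ih => exact hθrec k ▸ fistaTheta_pos ih.ne'
  have hθle : ∀ k, θ k ≤ 1 := by
    rintro (_ | k)
    · exact hθinit.le
    · exact hθrec k ▸ fistaTheta_le_one _
  have hbound := fista_telescope (a := fun k => (f + ψ) (x k) - (f + ψ) xstar)
    (b := fun k => 1 / 2 * weightedSq v (z k - xstar)) hθinit hθpos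
    (fun k => hθrec k ▸ fistaTheta_sq (θ k))
    (fun k => fista_step v hfconv hψconv (hθpos k) (hθle k) (hgrad (y k)) (hdesc (y k))
      (hy k) (hxmin k) (hz k))
  rintro (_ | k) hk
  · omega
  · rw [Nat.add_sub_cancel, ← hzinit]
    exact hbound k

theorem stmt_4 {n : ℕ} (hn : 1 ≤ n)
    (v : Fin n → ℝ) (hv : ∀ i, 0 < v i)
    (f ψ F : EuclideanSpace ℝ (Fin n) → ℝ)
    (g : EuclideanSpace ℝ (Fin n) → EuclideanSpace ℝ (Fin n))
    (hfconv : ConvexOn ℝ Set.univ f)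
    (hgrad : ∀ x, HasGradientAt f (g x) x)
    (hdesc : ∀ x h : EuclideanSpace ℝ (Fin n),
      f (x + h) ≤ f x + ⟪g x, h⟫ + (1 / 2) * ∑ i, v i * (h i) ^ 2)
    (hψconv : ConvexOn ℝ Set.univ ψ)
    (hF : ∀ x, F x = f x + ψ x)
    (xstar : EuclideanSpace ℝ (Fin n)) (hxstar : ∀ x, F xstar ≤ F x)
    (x y z : ℕ → EuclideanSpace ℝ (Fin n)) (θ : ℕ → ℝ)
    (hθinit : θ 0 = 1) (hzinit : z 0 = x 0)
    (hy : ∀ k, y k = (1 - θ k) • x k + θ k • z k)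
    (hxmin : ∀ k, ∀ u : EuclideanSpace ℝ (Fin n),
      ⟪g (y k), x (k + 1) - y k⟫ + (1 / 2) * (∑ i, v i * ((x (k + 1) - y k) i) ^ 2)
          + ψ (x (k + 1))
        ≤ ⟪g (y k), u - y k⟫ + (1 / 2) * (∑ i, v i * ((u - y k) i) ^ 2) + ψ u)
    (hz : ∀ k, z (k + 1) = z k + (θ k)⁻¹ • (x (k + 1) - y k))
    (hθrec : ∀ k : ℕ, θ (k + 1) = (Real.sqrt ((θ k) ^ 4 + 4 * (θ k) ^ 2) - (θ k) ^ 2) / 2) :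
    ∀ k : ℕ, 1 ≤ k →
      (1 / (θ (k - 1)) ^ 2) * (F (x k) - F xstar)
          + (1 / 2) * ∑ i, v i * ((z k - xstar) i) ^ 2
        ≤ (1 / 2) * ∑ i, v i * ((x 0 - xstar) i) ^ 2 :=
  stmt_4_general v f ψ F g hfconv hgrad hdesc hψconv hF xstar x y z θ hθinit hzinit hy hxmin hz
    hθrec
end

section
/- Let α ∈ (0,1). For the FISTA iterates, if k is a natural number with k ≥ 2·(√((1+μ)/(α·μ)) − 1) + 1, then F(x_k) − F(x_*) ≤ α·(F(x_0) − F(x_*)). -/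
/-!
One prox-gradient step from `y` to `p` satisfies, for every `u`,
`F p ≤ F u + ½‖u - y‖ᵥ² - ½‖u - p‖ᵥ²`: combine the descent inequality at `y`, the gradient
inequality of the convex `f` at `y`, and the minimality of `p` for a model that is `1`-strongly
convex in `‖·‖ᵥ`. Taking `u = (1 - θₖ) xₖ + θₖ x⋆` turns this into
`F xₖ₊₁ - F⋆ + θₖ²/2 ‖x⋆ - zₖ₊₁‖ᵥ² ≤ (1 - θₖ)(F xₖ - F⋆) + θₖ²/2 ‖x⋆ - zₖ‖ᵥ²`, and since
`θₖ₊₁² = θₖ² (1 - θₖ₊₁)` this telescopes to `F xₖ₊₁ - F⋆ ≤ θₖ²/2 ‖x⋆ - x₀‖ᵥ²`. The recursion also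
gives `1/θₖ₊₁ ≥ 1/θₖ + 1/2`, so `θₖ ≤ 2/(k+2)`, while quadratic growth bounds `½‖x⋆ - x₀‖ᵥ²` by
`(F x₀ - F⋆)/μ`.
-/

open scoped RealInnerProductSpace
open Filter Topology Set

theorem ConvexOn.add_inner_sub_le_of_hasGradientAt {E : Type*} [NormedAddCommGroup E]
    [InnerProductSpace ℝ E] [CompleteSpace E] {f : E → ℝ} {g y : E}
    (hf : ConvexOn ℝ univ f) (hg : HasGradientAt f g y) (u : E) :
    f y + ⟪g, u - y⟫ ≤ f u := by
  set line := AffineMap.lineMap (k := ℝ) y u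
  have hline : ConvexOn ℝ univ (f ∘ line) := hf.comp_affineMap line
  have hderiv : HasDerivAt (f ∘ line) ⟪g, u - y⟫ 0 := by
    simpa using hg.hasFDerivAt.comp_hasDerivAt_of_eq (x := 0) AffineMap.hasDerivAt_lineMap
      (by simp)
  have hslope := hline.le_slope_of_hasDerivAt (mem_univ 0) (mem_univ 1) zero_lt_one hderiv
  simp [slope_def_field, line] at hslope
  linarith

section WeightedSqNorm

variable {ι : Type*} [Fintype ι]

def weightedSqNorm (v : ι → ℝ) (w : EuclideanSpace ℝ ι) : ℝ := ∑ i, v i * w i ^ 2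

variable {v : ι → ℝ}

theorem weightedSqNorm_nonneg (hv : ∀ i, 0 ≤ v i) (w : EuclideanSpace ℝ ι) :
    0 ≤ weightedSqNorm v w :=
  Finset.sum_nonneg fun i _ => mul_nonneg (hv i) (sq_nonneg _)

theorem weightedSqNorm_smul (c : ℝ) (w : EuclideanSpace ℝ ι) :
    weightedSqNorm v (c • w) = c ^ 2 * weightedSqNorm v w := by
  simp only [weightedSqNorm, Finset.mul_sum, PiLp.smul_apply, smul_eq_mul]
  exact Finset.sum_congr rfl fun i _ => by ring

theorem weightedSqNorm_sub_comm (a b : EuclideanSpace ℝ ι) :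
    weightedSqNorm v (a - b) = weightedSqNorm v (b - a) := by
  simp only [weightedSqNorm, PiLp.sub_apply]
  exact Finset.sum_congr rfl fun i _ => by ring

theorem weightedSqNorm_smul_add_one_sub_smul (l : ℝ) (a b : EuclideanSpace ℝ ι) :
    weightedSqNorm v (l • a + (1 - l) • b)
      = l * weightedSqNorm v a + (1 - l) * weightedSqNorm v b
        - l * (1 - l) * weightedSqNorm v (a - b) := by
  simp only [weightedSqNorm, Finset.mul_sum, ← Finset.sum_add_distrib, ← Finset.sum_sub_distrib,
    PiLp.add_apply, PiLp.sub_apply, PiLp.smul_apply, smul_eq_mul]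
  exact Finset.sum_congr rfl fun i _ => by ring

/- Compare `p` with the points `l • u + (1 - l) • p` of the segment `[p, u]`, divide by `l`
and let `l → 0⁺`. -/
theorem ConvexOn.add_weightedSqNorm_le_of_forall_le {φ : EuclideanSpace ℝ ι → ℝ}
    (hφ : ConvexOn ℝ univ φ) {y p : EuclideanSpace ℝ ι}
    (hp : ∀ u, φ p + (1 / 2) * weightedSqNorm v (p - y)
      ≤ φ u + (1 / 2) * weightedSqNorm v (u - y))
    (u : EuclideanSpace ℝ ι) :
    φ p + (1 / 2) * weightedSqNorm v (p - y) + (1 / 2) * weightedSqNorm v (u - p)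
      ≤ φ u + (1 / 2) * weightedSqNorm v (u - y) := by
  have hsegment : ∀ l ∈ Ioo (0 : ℝ) 1,
      φ p + (1 / 2) * weightedSqNorm v (p - y) + (1 / 2) * weightedSqNorm v (u - p)
        ≤ φ u + (1 / 2) * weightedSqNorm v (u - y) + l / 2 * weightedSqNorm v (u - p) := by
    rintro l ⟨hl0, hl1⟩
    have hmin := hp (l • u + (1 - l) • p)
    have hshift : l • u + (1 - l) • p - y = l • (u - y) + (1 - l) • (p - y) := by module
    have hφl := hφ.2 (mem_univ u) (mem_univ p) hl0.le (by linarith) (add_sub_cancel l 1)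
    rw [hshift, weightedSqNorm_smul_add_one_sub_smul, sub_sub_sub_cancel_right] at hmin
    rw [smul_eq_mul, smul_eq_mul] at hφl
    refine le_of_mul_le_mul_left ?_ hl0
    linear_combination hmin + hφl
  have hlim : Tendsto (fun l : ℝ => φ u + (1 / 2) * weightedSqNorm v (u - y)
      + l / 2 * weightedSqNorm v (u - p)) (𝓝[>] 0)
      (𝓝 (φ u + (1 / 2) * weightedSqNorm v (u - y))) :=
    tendsto_nhdsWithin_of_tendsto_nhds (Continuous.tendsto' (by fun_prop) _ _ (by simp))
  exact ge_of_tendsto hlim (mem_of_superset (Ioo_mem_nhdsGT one_pos) hsegment)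

end WeightedSqNorm

noncomputable def fistaNextTheta (t : ℝ) : ℝ := (Real.sqrt (t ^ 4 + 4 * t ^ 2) - t ^ 2) / 2

theorem fistaNextTheta_sq (t : ℝ) : fistaNextTheta t ^ 2 = t ^ 2 * (1 - fistaNextTheta t) := by
  have hs := Real.sq_sqrt (by positivity : 0 ≤ t ^ 4 + 4 * t ^ 2)
  unfold fistaNextTheta
  linear_combination hs / 4

theorem fistaNextTheta_pos {t : ℝ} (ht : 0 < t) : 0 < fistaNextTheta t := by
  have : t ^ 2 < Real.sqrt (t ^ 4 + 4 * t ^ 2) :=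
    Real.lt_sqrt_of_sq_lt (by nlinarith [pow_pos ht 2])
  unfold fistaNextTheta
  linarith

theorem inv_add_half_le_inv_fistaNextTheta {t : ℝ} (ht : 0 < t) :
    t⁻¹ + 1 / 2 ≤ (fistaNextTheta t)⁻¹ := by
  set t' := fistaNextTheta t
  have ht' : 0 < t' := fistaNextTheta_pos ht
  have hrel : (t')⁻¹ ^ 2 - (t')⁻¹ = t⁻¹ ^ 2 := by
    field_simp
    linear_combination -fistaNextTheta_sq t
  have ha := inv_pos.2 ht
  have hb : 1 < (t')⁻¹ := by nlinarith [inv_pos.2 ht']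
  nlinarith

theorem fista_theta_bounds {θ : ℕ → ℝ} (h0 : θ 0 = 1)
    (hrec : ∀ k, θ (k + 1) = fistaNextTheta (θ k)) (k : ℕ) :
    0 < θ k ∧ 1 + (k : ℝ) / 2 ≤ (θ k)⁻¹ := by
  induction k with
  | zero => simp [h0]
  | succ k ih =>
    rw [hrec]
    refine ⟨fistaNextTheta_pos ih.1, ?_⟩
    have := inv_add_half_le_inv_fistaNextTheta ih.1
    push_cast
    linarith [ih.2]

theorem fista_theta_sq_le_inv {θ : ℕ → ℝ} (h0 : θ 0 = 1)
    (hrec : ∀ k, θ (k + 1) = fistaNextTheta (θ k)) {R : ℝ} (hR : 0 < R) {m : ℕ}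
    (hm : 2 * Real.sqrt R ≤ m + 2) :
    θ m ^ 2 ≤ R⁻¹ := by
  obtain ⟨hpos, hinv⟩ := fista_theta_bounds h0 hrec m
  have hsqrt : Real.sqrt R ≤ (θ m)⁻¹ := by linarith
  have h := pow_le_pow_left₀ (Real.sqrt_nonneg R) hsqrt 2
  rw [Real.sq_sqrt hR.le, inv_pow] at h
  exact (le_inv_comm₀ hR (pow_pos hpos 2)).1 h

theorem fista_potential_le {θ e d : ℕ → ℝ} (h0 : θ 0 = 1)
    (hθ : ∀ k, θ (k + 1) ^ 2 = θ k ^ 2 * (1 - θ (k + 1))) (hθ1 : ∀ k, θ k ≤ 1)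
    (hstep : ∀ k, e (k + 1) + θ k ^ 2 * d (k + 1) ≤ (1 - θ k) * e k + θ k ^ 2 * d k)
    (k : ℕ) :
    e (k + 1) + θ k ^ 2 * d (k + 1) ≤ θ k ^ 2 * d 0 := by
  induction k with
  | zero => simpa [h0] using hstep 0
  | succ k ih =>
    have hscaled := mul_le_mul_of_nonneg_left ih (sub_nonneg.2 (hθ1 (k + 1)))
    linear_combination hstep (k + 1) + hscaled + (d (k + 1) - d 0) * hθ k

section ProxGrad

variable {ι : Type*} [Fintype ι] {v : ι → ℝ} {f ψ : EuclideanSpace ℝ ι → ℝ}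
  {g : EuclideanSpace ℝ ι → EuclideanSpace ℝ ι}

def IsProxGradStep (v : ι → ℝ) (g : EuclideanSpace ℝ ι → EuclideanSpace ℝ ι)
    (ψ : EuclideanSpace ℝ ι → ℝ) (y p : EuclideanSpace ℝ ι) : Prop :=
  ∀ u, ⟪g y, p - y⟫ + (1 / 2) * weightedSqNorm v (p - y) + ψ p
    ≤ ⟪g y, u - y⟫ + (1 / 2) * weightedSqNorm v (u - y) + ψ u

theorem IsProxGradStep.le (hf : ConvexOn ℝ univ f) (hg : ∀ x, HasGradientAt f (g x) x)
    (hdesc : ∀ x h, f (x + h) ≤ f x + ⟪g x, h⟫ + (1 / 2) * weightedSqNorm v h)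
    (hψ : ConvexOn ℝ univ ψ) {y p : EuclideanSpace ℝ ι} (hp : IsProxGradStep v g ψ y p)
    (u : EuclideanSpace ℝ ι) :
    (f + ψ) p ≤ (f + ψ) u + (1 / 2) * weightedSqNorm v (u - y)
      - (1 / 2) * weightedSqNorm v (u - p) := by
  have hmodel : ConvexOn ℝ univ (fun u => ⟪g y, u - y⟫ + ψ u) := by
    have hlin := ((innerₗ _ (g y)).convexOn convex_univ).add_const (-⟪g y, y⟫)
    refine (hlin.add hψ).congr fun u _ => ?_
    simp [sub_eq_add_neg, inner_add_right]
  have hthree := hmodel.add_weightedSqNorm_le_of_forall_le (v := v) (y := y) (p := p)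
    (fun u => by linarith [hp u]) u
  have hupper := hdesc y (p - y)
  rw [add_sub_cancel] at hupper
  have hlower := hf.add_inner_sub_le_of_hasGradientAt (hg y) u
  simp only [Pi.add_apply]
  linarith

theorem IsProxGradStep.fista_potential_step (hf : ConvexOn ℝ univ f)
    (hg : ∀ x, HasGradientAt f (g x) x)
    (hdesc : ∀ x h, f (x + h) ≤ f x + ⟪g x, h⟫ + (1 / 2) * weightedSqNorm v h)
    (hψ : ConvexOn ℝ univ ψ) {θ : ℝ} (hθ0 : 0 < θ) (hθ1 : θ ≤ 1)
    {x y z x' z' : EuclideanSpace ℝ ι} (hy : y = (1 - θ) • x + θ • z)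
    (hx' : IsProxGradStep v g ψ y x') (hz' : z' = z + θ⁻¹ • (x' - y))
    (xs : EuclideanSpace ℝ ι) :
    (f + ψ) x' - (f + ψ) xs + θ ^ 2 * ((1 / 2) * weightedSqNorm v (xs - z'))
      ≤ (1 - θ) * ((f + ψ) x - (f + ψ) xs)
        + θ ^ 2 * ((1 / 2) * weightedSqNorm v (xs - z)) := by
  have hprox := hx'.le hf hg hdesc hψ ((1 - θ) • x + θ • xs)
  have hshift : (1 - θ) • x + θ • xs - y = θ • (xs - z) := by rw [hy]; module
  have hshift' : (1 - θ) • x + θ • xs - x' = θ • (xs - z') := by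
    rw [hz', hy, smul_sub θ xs, smul_add, smul_inv_smul₀ hθ0.ne']; module
  have hconv :=
    (hf.add hψ).2 (mem_univ x) (mem_univ xs) (by linarith) hθ0.le (sub_add_cancel 1 θ)
  rw [hshift, hshift', weightedSqNorm_smul, weightedSqNorm_smul] at hprox
  rw [smul_eq_mul, smul_eq_mul] at hconv
  linarith

theorem fista_rate (hv : ∀ i, 0 ≤ v i) (hf : ConvexOn ℝ univ f)
    (hg : ∀ x, HasGradientAt f (g x) x)
    (hdesc : ∀ x h, f (x + h) ≤ f x + ⟪g x, h⟫ + (1 / 2) * weightedSqNorm v h)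
    (hψ : ConvexOn ℝ univ ψ) {x y z : ℕ → EuclideanSpace ℝ ι} {θ : ℕ → ℝ}
    (hθ0 : θ 0 = 1) (hθrec : ∀ k, θ (k + 1) = fistaNextTheta (θ k)) (hz0 : z 0 = x 0)
    (hy : ∀ k, y k = (1 - θ k) • x k + θ k • z k)
    (hx : ∀ k, IsProxGradStep v g ψ (y k) (x (k + 1)))
    (hz : ∀ k, z (k + 1) = z k + (θ k)⁻¹ • (x (k + 1) - y k)) (xs : EuclideanSpace ℝ ι) (m : ℕ) :
    (f + ψ) (x (m + 1)) - (f + ψ) xs ≤ θ m ^ 2 * ((1 / 2) * weightedSqNorm v (xs - x 0)) := by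
  have hθ := fista_theta_bounds hθ0 hθrec
  have hθ1 (k : ℕ) : θ k ≤ 1 :=
    (one_le_inv₀ (hθ k).1).1 (by linarith [(hθ k).2, k.cast_nonneg (α := ℝ)])
  have hpot := fista_potential_le (e := fun k => (f + ψ) (x k) - (f + ψ) xs)
    (d := fun k => (1 / 2) * weightedSqNorm v (xs - z k)) hθ0
    (fun k => (hθrec k).symm ▸ fistaNextTheta_sq (θ k)) hθ1
    (fun k => (hx k).fista_potential_step hf hg hdesc hψ (hθ k).1 (hθ1 k) (hy k) (hz k) xs) m
  rw [hz0] at hpot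
  have hdrop := mul_nonneg (sq_nonneg (θ m))
    (mul_nonneg one_half_pos.le (weightedSqNorm_nonneg hv (xs - z (m + 1))))
  linarith

end ProxGrad

theorem stmt_7_general {n : ℕ}
    (v : Fin n → ℝ) (hv : ∀ i, 0 < v i)
    (f ψ F : EuclideanSpace ℝ (Fin n) → ℝ)
    (g : EuclideanSpace ℝ (Fin n) → EuclideanSpace ℝ (Fin n))
    (hfconv : ConvexOn ℝ Set.univ f)
    (hgrad : ∀ x, HasGradientAt f (g x) x)
    (hdesc : ∀ x h : EuclideanSpace ℝ (Fin n),
      f (x + h) ≤ f x + ⟪g x, h⟫ + (1 / 2) * ∑ i, v i * (h i) ^ 2)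
    (hψconv : ConvexOn ℝ Set.univ ψ)
    (hF : ∀ x, F x = f x + ψ x)
    (xstar : EuclideanSpace ℝ (Fin n))
    (x y z : ℕ → EuclideanSpace ℝ (Fin n)) (θ : ℕ → ℝ)
    (hθinit : θ 0 = 1) (hzinit : z 0 = x 0)
    (hy : ∀ k, y k = (1 - θ k) • x k + θ k • z k)
    (hxmin : ∀ k, ∀ u : EuclideanSpace ℝ (Fin n),
      ⟪g (y k), x (k + 1) - y k⟫ + (1 / 2) * (∑ i, v i * ((x (k + 1) - y k) i) ^ 2)
          + ψ (x (k + 1))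
        ≤ ⟪g (y k), u - y k⟫ + (1 / 2) * (∑ i, v i * ((u - y k) i) ^ 2) + ψ u)
    (hz : ∀ k, z (k + 1) = z k + (θ k)⁻¹ • (x (k + 1) - y k))
    (hθrec : ∀ k : ℕ, θ (k + 1) = (Real.sqrt ((θ k) ^ 4 + 4 * (θ k) ^ 2) - (θ k) ^ 2) / 2)
    (μ : ℝ) (hμ : 0 < μ)
    (hsc : ∀ u : EuclideanSpace ℝ (Fin n),
      F xstar + (μ / 2) * ∑ i, v i * ((u - xstar) i) ^ 2 ≤ F u)
    (α : ℝ) (hα0 : 0 < α) (hα1 : α < 1) :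
    ∀ k : ℕ, (k : ℝ) ≥ 2 * (Real.sqrt ((1 + μ) / (α * μ)) - 1) + 1 →
      F (x k) - F xstar ≤ α * (F (x 0) - F xstar) := by
  obtain rfl : F = f + ψ := funext hF
  have hv' : ∀ i, 0 ≤ v i := fun i => (hv i).le
  have hgap : μ * ((1 / 2) * weightedSqNorm v (xstar - x 0))
      ≤ (f + ψ) (x 0) - (f + ψ) xstar := by
    have h : (f + ψ) xstar + μ / 2 * weightedSqNorm v (x 0 - xstar) ≤ (f + ψ) (x 0) := hsc (x 0)
    rw [weightedSqNorm_sub_comm] at h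
    linarith
  intro k hk
  set R := (1 + μ) / (α * μ)
  have hR : 1 ≤ R := by rw [le_div_iff₀ (by positivity)]; nlinarith
  obtain ⟨m, rfl⟩ : ∃ m, k = m + 1 := Nat.exists_eq_add_one.2 <| by
    have := Real.one_le_sqrt.2 hR
    exact_mod_cast (by linarith : (0 : ℝ) < k)
  have hθsq : θ m ^ 2 ≤ α * μ :=
    calc θ m ^ 2 ≤ R⁻¹ :=
          fista_theta_sq_le_inv hθinit hθrec (by positivity) (by push_cast at hk; linarith)
      _ = α * μ / (1 + μ) := inv_div _ _
      _ ≤ α * μ := div_le_self (by positivity) (by linarith)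
  calc (f + ψ) (x (m + 1)) - (f + ψ) xstar
      ≤ θ m ^ 2 * ((1 / 2) * weightedSqNorm v (xstar - x 0)) :=
        fista_rate hv' hfconv hgrad hdesc hψconv hθinit hθrec hzinit hy hxmin hz xstar m
    _ ≤ α * μ * ((1 / 2) * weightedSqNorm v (xstar - x 0)) := by
      gcongr
      linarith [weightedSqNorm_nonneg hv' (xstar - x 0)]
    _ ≤ α * ((f + ψ) (x 0) - (f + ψ) xstar) := by
      rw [mul_assoc]
      exact mul_le_mul_of_nonneg_left hgap hα0.le

theorem stmt_7 {n : ℕ} (hn : 1 ≤ n)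
    (v : Fin n → ℝ) (hv : ∀ i, 0 < v i)
    (f ψ F : EuclideanSpace ℝ (Fin n) → ℝ)
    (g : EuclideanSpace ℝ (Fin n) → EuclideanSpace ℝ (Fin n))
    (hfconv : ConvexOn ℝ Set.univ f)
    (hgrad : ∀ x, HasGradientAt f (g x) x)
    (hdesc : ∀ x h : EuclideanSpace ℝ (Fin n),
      f (x + h) ≤ f x + ⟪g x, h⟫ + (1 / 2) * ∑ i, v i * (h i) ^ 2)
    (hψconv : ConvexOn ℝ Set.univ ψ)
    (hF : ∀ x, F x = f x + ψ x)
    (xstar : EuclideanSpace ℝ (Fin n)) (hxstar : ∀ x, F xstar ≤ F x)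
    (x y z : ℕ → EuclideanSpace ℝ (Fin n)) (θ : ℕ → ℝ)
    (hθinit : θ 0 = 1) (hzinit : z 0 = x 0)
    (hy : ∀ k, y k = (1 - θ k) • x k + θ k • z k)
    (hxmin : ∀ k, ∀ u : EuclideanSpace ℝ (Fin n),
      ⟪g (y k), x (k + 1) - y k⟫ + (1 / 2) * (∑ i, v i * ((x (k + 1) - y k) i) ^ 2)
          + ψ (x (k + 1))
        ≤ ⟪g (y k), u - y k⟫ + (1 / 2) * (∑ i, v i * ((u - y k) i) ^ 2) + ψ u)
    (hz : ∀ k, z (k + 1) = z k + (θ k)⁻¹ • (x (k + 1) - y k))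
    (hθrec : ∀ k : ℕ, θ (k + 1) = (Real.sqrt ((θ k) ^ 4 + 4 * (θ k) ^ 2) - (θ k) ^ 2) / 2)
    (μ : ℝ) (hμ : 0 < μ)
    (hsc : ∀ u : EuclideanSpace ℝ (Fin n),
      F xstar + (μ / 2) * ∑ i, v i * ((u - xstar) i) ^ 2 ≤ F u)
    (α : ℝ) (hα0 : 0 < α) (hα1 : α < 1) :
    ∀ k : ℕ, (k : ℝ) ≥ 2 * (Real.sqrt ((1 + μ) / (α * μ)) - 1) + 1 →
      F (x k) - F xstar ≤ α * (F (x 0) - F xstar) :=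
  stmt_7_general v hv f ψ F g hfconv hgrad hdesc hψconv hF xstar x y z θ hθinit hzinit hy hxmin hz
    hθrec μ hμ hsc α hα0 hα1
end

section
/- For the FISTA iterates, let k ≥ 1 and suppose F(z_k) ≤ F(x_k). Then (1/2)·‖z_k − x_*‖_v² ≤ (1/(1 + μ/θ_{k−1}²))·(1/2)·‖z_0 − x_*‖_v². -/
/-!
Write `Q` for the weighted square norm `‖·‖_v²`. Minimality of `x_{k+1}` in the proximal
model, the descent inequality and convexity of `ψ` give, for every `u`,
`F x_{k+1} + ½ Q (u - x_{k+1}) ≤ f y_k + ⟪∇f y_k, u - y_k⟫ + ψ u + ½ Q (u - y_k)`.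
At `u = (1 - θ_k) x_k + θ_k x_*` one has `u - y_k = θ_k (x_* - z_k)` and
`u - x_{k+1} = θ_k (x_* - z_{k+1})`, and convexity of `f` bounds the affine part, so
`F x_{k+1} - F x_* + θ_k² ½ Q (z_{k+1} - x_*)`
`  ≤ (1 - θ_k) (F x_k - F x_*) + θ_k² ½ Q (z_k - x_*)`.
As `θ_{k+1}² = θ_k² (1 - θ_{k+1})`, dividing by `θ_k²` and telescoping from `θ_0 = 1` gives
`(F x_k - F x_*) / θ_{k-1}² + ½ Q (z_k - x_*) ≤ ½ Q (z_0 - x_*)`. Finally quadratic growth at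
`z_k` together with `F z_k ≤ F x_k` gives `μ · ½ Q (z_k - x_*) ≤ F x_k - F x_*`.
-/

open scoped RealInnerProductSpace
open Set Filter Topology QuadraticMap

theorem QuadraticMap.map_add_smul {R M : Type*} [CommRing R] [AddCommGroup M] [Module R M]
    (Q : QuadraticMap R M R) (a b : M) (t : R) :
    Q (a + t • b) = Q a + t * polar Q a b + t ^ 2 * Q b := by
  have h := polar_smul_right Q t a b
  simp only [polar, QuadraticMap.map_smul, smul_eq_mul] at h ⊢
  linear_combination h

noncomputable def EuclideanSpace.weightedSumSquares {ι : Type*} [Fintype ι] (v : ι → ℝ) :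
    QuadraticForm ℝ (EuclideanSpace ℝ ι) :=
  (QuadraticMap.weightedSumSquares ℝ v).comp (WithLp.linearEquiv 2 ℝ (ι → ℝ)).toLinearMap

theorem EuclideanSpace.weightedSumSquares_apply {ι : Type*} [Fintype ι] (v : ι → ℝ)
    (a : EuclideanSpace ℝ ι) : EuclideanSpace.weightedSumSquares v a = ∑ i, v i * a i ^ 2 := by
  simp [EuclideanSpace.weightedSumSquares, pow_two]

theorem nonneg_of_forall_mem_Ioc_nonneg_add_mul {a b : ℝ}
    (h : ∀ t ∈ Ioc (0 : ℝ) 1, 0 ≤ a + t * b) : 0 ≤ a := by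
  have hlim : Tendsto (fun t : ℝ => a + t * b) (𝓝[>] 0) (𝓝 a) := by
    have hcont : Continuous (fun t : ℝ => a + t * b) := by fun_prop
    simpa using (hcont.tendsto 0).mono_left nhdsWithin_le_nhds
  exact ge_of_tendsto hlim (eventually_of_mem (Ioc_mem_nhdsGT one_pos) h)

theorem le_one_div_one_add_div_mul {a b b₀ c μ : ℝ} (hc : 0 < c) (hμ : 0 ≤ μ)
    (hab : μ * b ≤ a) (h : a / c + b ≤ b₀) : b ≤ 1 / (1 + μ / c) * b₀ := by
  rw [one_div_mul_eq_div, le_div_iff₀ (by positivity)]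
  have := div_le_div_of_nonneg_right hab hc.le
  calc b * (1 + μ / c) = μ * b / c + b := by ring
    _ ≤ b₀ := by linarith

section ProximalGradient

variable {E : Type*} [NormedAddCommGroup E] [InnerProductSpace ℝ E]

theorem ConvexOn.add_inner_le_of_hasGradientAt [CompleteSpace E] {f : E → ℝ}
    (hf : ConvexOn ℝ univ f) {x g : E} (hg : HasGradientAt f g x) (p : E) :
    f x + ⟪g, p - x⟫ ≤ f p := by
  have hconv : ConvexOn ℝ univ (f ∘ AffineMap.lineMap (k := ℝ) x p) :=
    hf.comp_affineMap (AffineMap.lineMap x p)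
  have hderiv : HasDerivAt (f ∘ AffineMap.lineMap (k := ℝ) x p) ⟪g, p - x⟫ 0 := by
    have hfx : HasFDerivAt f (InnerProductSpace.toDual ℝ E g) (AffineMap.lineMap x p (0 : ℝ)) :=
      by simpa using hg.hasFDerivAt
    simpa using hfx.comp_hasDerivAt (0 : ℝ) AffineMap.hasDerivAt_lineMap
  have hslope := hconv.le_slope_of_hasDerivAt (mem_univ 0) (mem_univ 1) one_pos hderiv
  simp only [slope_def_field, Function.comp_apply, AffineMap.lineMap_apply_one,
    AffineMap.lineMap_apply_zero, sub_zero, div_one] at hslope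
  linarith

/-- The function minimised by the proximal-gradient step from `y`, where `g` is the gradient of
the smooth part at `y`. -/
noncomputable def proxModel (Q : QuadraticForm ℝ E) (ψ : E → ℝ) (g y u : E) : ℝ :=
  ⟪g, u - y⟫ + (1 / 2) * Q (u - y) + ψ u

variable (Q : QuadraticForm ℝ E) {f ψ : E → ℝ} {g y w : E}

/- Compare `w` with `w + t • (u - w)`: convexity of `ψ` bounds the increase of the model by
`t * (right side - ψ w) + t² * ½ Q (u - w)`, which is nonnegative for all `t ∈ (0, 1]`. -/
theorem ConvexOn.le_of_isMin_proxModel (hψ : ConvexOn ℝ univ ψ)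
    (hw : ∀ u, proxModel Q ψ g y w ≤ proxModel Q ψ g y u) (u : E) :
    ψ w ≤ ψ u + ⟪g, u - w⟫ + (1 / 2) * polar Q (w - y) (u - w) := by
  rw [← sub_nonneg]
  refine nonneg_of_forall_mem_Ioc_nonneg_add_mul (b := (1 / 2) * Q (u - w)) fun t ht => ?_
  have hmin := hw (w + t • (u - w))
  have hψt : ψ (w + t • (u - w)) ≤ (1 - t) * ψ w + t * ψ u := by
    have := hψ.2 (mem_univ w) (mem_univ u) (sub_nonneg.2 ht.2) ht.1.le (by ring)
    rwa [show (1 - t) • w + t • u = w + t • (u - w) by module] at this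
  have hsub : w + t • (u - w) - y = (w - y) + t • (u - w) := by abel
  rw [proxModel, proxModel, hsub, Q.map_add_smul, inner_add_right,
    real_inner_smul_right] at hmin
  refine nonneg_of_mul_nonneg_right ?_ ht.1
  linarith

theorem add_le_of_isMin_proxModel (hψ : ConvexOn ℝ univ ψ)
    (hdesc : ∀ h, f (y + h) ≤ f y + ⟪g, h⟫ + (1 / 2) * Q h)
    (hw : ∀ u, proxModel Q ψ g y w ≤ proxModel Q ψ g y u) (u : E) :
    f w + ψ w + (1 / 2) * Q (u - w) ≤ f y + ⟪g, u - y⟫ + ψ u + (1 / 2) * Q (u - y) := by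
  have hf := hdesc (w - y)
  rw [add_sub_cancel] at hf
  have hψ := hψ.le_of_isMin_proxModel Q hw u
  have hQ : Q (u - y) = Q (w - y) + Q (u - w) + polar Q (w - y) (u - w) := by
    rw [polar, show w - y + (u - w) = u - y by abel]; ring
  have hinner : ⟪g, u - y⟫ = ⟪g, w - y⟫ + ⟪g, u - w⟫ := by
    rw [← inner_add_right, sub_add_sub_cancel']
  linarith

theorem fista_lyapunov_step [CompleteSpace E] (hf : ConvexOn ℝ univ f)
    (hψ : ConvexOn ℝ univ ψ) (hg : HasGradientAt f g y)
    (hdesc : ∀ h, f (y + h) ≤ f y + ⟪g, h⟫ + (1 / 2) * Q h)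
    {x z z' xs : E} {θ : ℝ} (hθ : θ ∈ Ioc 0 1) (hy : y = (1 - θ) • x + θ • z)
    (hw : ∀ u, proxModel Q ψ g y w ≤ proxModel Q ψ g y u)
    (hz' : z' = z + θ⁻¹ • (w - y)) :
    (f + ψ) w - (f + ψ) xs + θ ^ 2 * ((1 / 2) * Q (z' - xs))
      ≤ (1 - θ) * ((f + ψ) x - (f + ψ) xs) + θ ^ 2 * ((1 / 2) * Q (z - xs)) := by
  obtain ⟨hθ0, hθ1⟩ := hθ
  set u := (1 - θ) • x + θ • xs
  have hdecr := add_le_of_isMin_proxModel Q hψ hdesc hw u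
  have hlin : f y + ⟪g, u - y⟫ ≤ (1 - θ) * f x + θ * f xs := by
    have hx := mul_le_mul_of_nonneg_left (hf.add_inner_le_of_hasGradientAt hg x)
      (sub_nonneg.2 hθ1)
    have hxs := mul_le_mul_of_nonneg_left (hf.add_inner_le_of_hasGradientAt hg xs) hθ0.le
    rw [show u - y = (1 - θ) • (x - y) + θ • (xs - y) by module, inner_add_right,
      real_inner_smul_right, real_inner_smul_right]
    linarith
  have hψu : ψ u ≤ (1 - θ) * ψ x + θ * ψ xs :=
    hψ.2 (mem_univ x) (mem_univ xs) (sub_nonneg.2 hθ1) hθ0.le (by ring)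
  have huy : u - y = θ • (xs - z) := by rw [hy]; module
  have hwy : w - y = θ • (z' - z) := by
    rw [hz', add_sub_cancel_left, smul_smul, mul_inv_cancel₀ hθ0.ne', one_smul]
  have huw : u - w = θ • (xs - z') := by
    rw [show u - w = (u - y) - (w - y) by abel, huy, hwy]; module
  have hQuy : Q (u - y) = θ ^ 2 * Q (z - xs) := by
    rw [huy, QuadraticMap.map_smul, Q.map_sub, smul_eq_mul, pow_two]
  have hQuw : Q (u - w) = θ ^ 2 * Q (z' - xs) := by
    rw [huw, QuadraticMap.map_smul, Q.map_sub, smul_eq_mul, pow_two]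
  simp only [Pi.add_apply]
  linarith

end ProximalGradient

section Momentum

variable {θ : ℕ → ℝ}

theorem momentum_sq_succ (hθ : ∀ k, θ (k + 1) = (√(θ k ^ 4 + 4 * θ k ^ 2) - θ k ^ 2) / 2)
    (k : ℕ) : θ (k + 1) ^ 2 = θ k ^ 2 * (1 - θ (k + 1)) := by
  have hsqrt := Real.sq_sqrt (by positivity : 0 ≤ θ k ^ 4 + 4 * θ k ^ 2)
  rw [hθ k]
  linear_combination hsqrt / 4

theorem momentum_mem_Ioc (h0 : θ 0 = 1)
    (hθ : ∀ k, θ (k + 1) = (√(θ k ^ 4 + 4 * θ k ^ 2) - θ k ^ 2) / 2) (k : ℕ) :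
    θ k ∈ Ioc 0 1 := by
  induction k with
  | zero => simp [h0]
  | succ k ih =>
    have hpos : 0 < θ (k + 1) := by
      refine hθ k ▸ half_pos (sub_pos.2 ((Real.lt_sqrt (by positivity)).2 ?_))
      nlinarith [pow_pos ih.1 2]
    refine ⟨hpos, ?_⟩
    nlinarith [momentum_sq_succ hθ k, pow_pos ih.1 2, pow_pos hpos 2]

theorem div_sq_add_le_of_lyapunov_step {a b : ℕ → ℝ} (h0 : θ 0 = 1) (hpos : ∀ k, 0 < θ k)
    (hsq : ∀ k, θ (k + 1) ^ 2 = θ k ^ 2 * (1 - θ (k + 1)))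
    (hstep : ∀ k, a (k + 1) + θ k ^ 2 * b (k + 1) ≤ (1 - θ k) * a k + θ k ^ 2 * b k)
    (k : ℕ) : a (k + 1) / θ k ^ 2 + b (k + 1) ≤ b 0 := by
  induction k with
  | zero => simpa [h0] using hstep 0
  | succ k ih =>
    have hk := (hpos k).ne'
    have hk' := (hpos (k + 1)).ne'
    have hk1 := pow_pos (hpos (k + 1)) 2
    refine le_of_mul_le_mul_left ?_ hk1
    calc θ (k + 1) ^ 2 * (a (k + 1 + 1) / θ (k + 1) ^ 2 + b (k + 1 + 1))
        = a (k + 1 + 1) + θ (k + 1) ^ 2 * b (k + 1 + 1) := by field_simp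
      _ ≤ (1 - θ (k + 1)) * a (k + 1) + θ (k + 1) ^ 2 * b (k + 1) := hstep (k + 1)
      _ = θ (k + 1) ^ 2 * (a (k + 1) / θ k ^ 2 + b (k + 1)) := by
        rw [hsq]; field_simp
      _ ≤ θ (k + 1) ^ 2 * b 0 := mul_le_mul_of_nonneg_left ih hk1.le

end Momentum

theorem stmt_8_general {n : ℕ}
    (v : Fin n → ℝ)
    (f ψ F : EuclideanSpace ℝ (Fin n) → ℝ)
    (g : EuclideanSpace ℝ (Fin n) → EuclideanSpace ℝ (Fin n))
    (hfconv : ConvexOn ℝ Set.univ f)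
    (hgrad : ∀ x, HasGradientAt f (g x) x)
    (hdesc : ∀ x h : EuclideanSpace ℝ (Fin n),
      f (x + h) ≤ f x + ⟪g x, h⟫ + (1 / 2) * ∑ i, v i * (h i) ^ 2)
    (hψconv : ConvexOn ℝ Set.univ ψ)
    (hF : ∀ x, F x = f x + ψ x)
    (xstar : EuclideanSpace ℝ (Fin n))
    (x y z : ℕ → EuclideanSpace ℝ (Fin n)) (θ : ℕ → ℝ)
    (hθinit : θ 0 = 1)
    (hy : ∀ k, y k = (1 - θ k) • x k + θ k • z k)
    (hxmin : ∀ k, ∀ u : EuclideanSpace ℝ (Fin n),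
      ⟪g (y k), x (k + 1) - y k⟫ + (1 / 2) * (∑ i, v i * ((x (k + 1) - y k) i) ^ 2)
          + ψ (x (k + 1))
        ≤ ⟪g (y k), u - y k⟫ + (1 / 2) * (∑ i, v i * ((u - y k) i) ^ 2) + ψ u)
    (hz : ∀ k, z (k + 1) = z k + (θ k)⁻¹ • (x (k + 1) - y k))
    (hθrec : ∀ k : ℕ, θ (k + 1) = (Real.sqrt ((θ k) ^ 4 + 4 * (θ k) ^ 2) - (θ k) ^ 2) / 2)
    (μ : ℝ) (hμ : 0 < μ)
    (hsc : ∀ u : EuclideanSpace ℝ (Fin n),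
      F xstar + (μ / 2) * ∑ i, v i * ((u - xstar) i) ^ 2 ≤ F u) :
    ∀ k : ℕ, 1 ≤ k → F (z k) ≤ F (x k) →
      (1 / 2) * ∑ i, v i * ((z k - xstar) i) ^ 2
        ≤ (1 / (1 + μ / (θ (k - 1)) ^ 2)) * ((1 / 2) * ∑ i, v i * ((z 0 - xstar) i) ^ 2) := by
  obtain rfl : F = f + ψ := funext hF
  simp only [← EuclideanSpace.weightedSumSquares_apply] at hdesc hxmin hsc ⊢
  set Q := EuclideanSpace.weightedSumSquares v
  have hθ := momentum_mem_Ioc hθinit hθrec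
  intro k hk hFz
  obtain ⟨j, rfl⟩ := Nat.exists_eq_add_of_le' hk
  have hlyap := div_sq_add_le_of_lyapunov_step (a := fun k => (f + ψ) (x k) - (f + ψ) xstar)
    (b := fun k => (1 / 2) * Q (z k - xstar)) hθinit (fun k => (hθ k).1)
    (momentum_sq_succ hθrec)
    (fun k => fista_lyapunov_step Q hfconv hψconv (hgrad (y k)) (hdesc (y k)) (hθ k) (hy k)
      (hxmin k) (hz k)) j
  have hgrowth := hsc (z (j + 1))
  refine le_one_div_one_add_div_mul (pow_pos (hθ j).1 2) hμ.le ?_ hlyap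
  linarith

theorem stmt_8 {n : ℕ} (hn : 1 ≤ n)
    (v : Fin n → ℝ) (hv : ∀ i, 0 < v i)
    (f ψ F : EuclideanSpace ℝ (Fin n) → ℝ)
    (g : EuclideanSpace ℝ (Fin n) → EuclideanSpace ℝ (Fin n))
    (hfconv : ConvexOn ℝ Set.univ f)
    (hgrad : ∀ x, HasGradientAt f (g x) x)
    (hdesc : ∀ x h : EuclideanSpace ℝ (Fin n),
      f (x + h) ≤ f x + ⟪g x, h⟫ + (1 / 2) * ∑ i, v i * (h i) ^ 2)
    (hψconv : ConvexOn ℝ Set.univ ψ)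
    (hF : ∀ x, F x = f x + ψ x)
    (xstar : EuclideanSpace ℝ (Fin n)) (hxstar : ∀ x, F xstar ≤ F x)
    (x y z : ℕ → EuclideanSpace ℝ (Fin n)) (θ : ℕ → ℝ)
    (hθinit : θ 0 = 1) (hzinit : z 0 = x 0)
    (hy : ∀ k, y k = (1 - θ k) • x k + θ k • z k)
    (hxmin : ∀ k, ∀ u : EuclideanSpace ℝ (Fin n),
      ⟪g (y k), x (k + 1) - y k⟫ + (1 / 2) * (∑ i, v i * ((x (k + 1) - y k) i) ^ 2)
          + ψ (x (k + 1))
        ≤ ⟪g (y k), u - y k⟫ + (1 / 2) * (∑ i, v i * ((u - y k) i) ^ 2) + ψ u)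
    (hz : ∀ k, z (k + 1) = z k + (θ k)⁻¹ • (x (k + 1) - y k))
    (hθrec : ∀ k : ℕ, θ (k + 1) = (Real.sqrt ((θ k) ^ 4 + 4 * (θ k) ^ 2) - (θ k) ^ 2) / 2)
    (μ : ℝ) (hμ : 0 < μ)
    (hsc : ∀ u : EuclideanSpace ℝ (Fin n),
      F xstar + (μ / 2) * ∑ i, v i * ((u - xstar) i) ^ 2 ≤ F u) :
    ∀ k : ℕ, 1 ≤ k → F (z k) ≤ F (x k) →
      (1 / 2) * ∑ i, v i * ((z k - xstar) i) ^ 2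
        ≤ (1 / (1 + μ / (θ (k - 1)) ^ 2)) * ((1 / 2) * ∑ i, v i * ((z 0 - xstar) i) ^ 2) :=
  stmt_8_general v f ψ F g hfconv hgrad hdesc hψconv hF xstar x y z θ hθinit hy hxmin hz hθrec μ hμ
    hsc
end

section
/- Let K ≥ 1 be a natural number, ρ ∈ [0,1] a real number, and d : ℕ → ℝ a sequence with d_k ≥ 0 for all k. Assume (i) for every k, d_k ≤ d_{K·⌊k/K⌋} (monotonicity between restarts), and (ii) for every m, d_{(m+1)·K} ≤ ρ·d_{m·K} (contraction at restarts). Then for every k ≥ K one has d_k ≤ (ρ^{1/K})^{k−K}·d_0, where powers are real powers. -/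
/-!
Contraction at every restart gives `d (m * K) ≤ ρ ^ m * d 0`, and monotonicity between restarts
bounds `d k` by its value at the last restart `m = ⌊k / K⌋`. Since `k - K < K * m`, the factor
`ρ ^ m = (ρ ^ (1 / K)) ^ (K * m)` is at most `(ρ ^ (1 / K)) ^ (k - K)`, because `ρ ^ (1 / K) ≤ 1`.
-/

namespace Real

theorem rpow_one_div_natCast_rpow_natCast_mul {ρ : ℝ} (hρ : 0 ≤ ρ) {K : ℕ} (hK : K ≠ 0)
    (m : ℕ) : (ρ ^ ((1 : ℝ) / K)) ^ ((K : ℝ) * m) = ρ ^ m := by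
  rw [← rpow_mul hρ, ← mul_assoc, one_div_mul_cancel (by exact_mod_cast hK), one_mul, rpow_natCast]

theorem pow_le_rpow_one_div_natCast_rpow {ρ : ℝ} (hρ0 : 0 ≤ ρ) (hρ1 : ρ ≤ 1) {K : ℕ}
    (hK : K ≠ 0) {m : ℕ} {x : ℝ} (hx0 : 0 ≤ x) (hxm : x ≤ K * m) :
    ρ ^ m ≤ (ρ ^ ((1 : ℝ) / K)) ^ x := by
  rw [← rpow_one_div_natCast_rpow_natCast_mul hρ0 hK m]
  exact rpow_le_rpow_of_exponent_ge' (rpow_nonneg hρ0 _)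
    (rpow_le_one hρ0 hρ1 (by positivity)) hx0 hxm

end Real

theorem Nat.cast_sub_le_mul_div {K : ℕ} (hK : 0 < K) (k : ℕ) :
    (k : ℝ) - K ≤ K * (k / K : ℕ) := by
  have h : k < K * (k / K + 1) := Nat.lt_mul_div_succ k hK
  have h' : (k : ℝ) < K * ((k / K : ℕ) + 1) := by exact_mod_cast h
  linarith

theorem stmt_11 (K : ℕ) (hK : 1 ≤ K) (ρ : ℝ) (hρ0 : 0 ≤ ρ) (hρ1 : ρ ≤ 1)
    (d : ℕ → ℝ) (hd : ∀ k, 0 ≤ d k)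
    (hmono : ∀ k : ℕ, d k ≤ d (K * (k / K)))
    (hcontract : ∀ m : ℕ, d ((m + 1) * K) ≤ ρ * d (m * K)) :
    ∀ k : ℕ, K ≤ k →
      d k ≤ (ρ ^ ((1 : ℝ) / (K : ℝ))) ^ ((k : ℝ) - (K : ℝ)) * d 0 := by
  intro k hk
  have hK0 : K ≠ 0 := by omega
  have h_restart : ∀ m : ℕ, d (m * K) ≤ ρ ^ m * d 0 := fun m => by
    simpa using le_geom (u := fun m => d (m * K)) hρ0 m fun m _ => hcontract m
  have h_exponent : (0 : ℝ) ≤ (k : ℝ) - K := sub_nonneg.mpr (by exact_mod_cast hk)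
  calc d k ≤ d (k / K * K) := by rw [Nat.mul_comm]; exact hmono k
    _ ≤ ρ ^ (k / K) * d 0 := h_restart (k / K)
    _ ≤ (ρ ^ ((1 : ℝ) / K)) ^ ((k : ℝ) - K) * d 0 := by
      gcongr
      · exact hd 0
      · exact Real.pow_le_rpow_one_div_natCast_rpow hρ0 hρ1 hK0 h_exponent
          (Nat.cast_sub_le_mul_div (by omega) k)
end

section
/- With the coefficients γ_k^i and sequence θ as defined, for every k ≥ 0 and every i with 0 ≤ i ≤ k, one has γ_{k+1}^i = θ_k²·γ_{i+1}^i/θ_i². -/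
/-- The recursion `θ_{k+1} = (√(θ_k⁴ + 4θ_k²) − θ_k²)/2` picks the root `s` of `s² + θ_k² s − θ_k² = 0`. -/
lemma sq_eq_one_sub_mul_sq_of_eq_sqrt {t s : ℝ} (h : s = (√(t ^ 4 + 4 * t ^ 2) - t ^ 2) / 2) :
    s ^ 2 = (1 - s) * t ^ 2 := by
  have hroot : 2 * s + t ^ 2 = √(t ^ 4 + 4 * t ^ 2) := by rw [h]; ring
  have hsq : (2 * s + t ^ 2) ^ 2 = t ^ 4 + 4 * t ^ 2 := by
    rw [hroot, Real.sq_sqrt (by positivity)]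
  linear_combination hsq / 4

lemma eq_sq_mul_div_sq_of_mul_one_sub {θ : ℕ → ℝ} {γ : ℕ → ℕ → ℝ} (hθ : ∀ k, θ k ≠ 0)
    (hsq : ∀ k, θ (k + 1) ^ 2 = (1 - θ (k + 1)) * θ k ^ 2)
    (hγ : ∀ k i, i ≤ k → γ (k + 2) i = (1 - θ (k + 1)) * γ (k + 1) i)
    {i k : ℕ} (hik : i ≤ k) :
    γ (k + 1) i = θ k ^ 2 * γ (i + 1) i / θ i ^ 2 := by
  induction k, hik using Nat.le_induction with
  | base => field_simp [hθ i]
  | succ k hik ih =>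
    rw [hγ k i hik, ih, hsq k]
    ring

theorem stmt_12_general (θ : ℕ → ℝ)
    (hθrec : ∀ k : ℕ, θ (k + 1) = (Real.sqrt ((θ k) ^ 4 + 4 * (θ k) ^ 2) - (θ k) ^ 2) / 2)
    (hθpos : ∀ k : ℕ, 0 < θ k)
    (γ : ℕ → ℕ → ℝ)
    (hγrec : ∀ k : ℕ, 1 ≤ k → ∀ i : ℕ, i ≤ k - 1 → γ (k + 1) i = (1 - θ k) * γ k i)
      :
    ∀ k : ℕ, ∀ i : ℕ, i ≤ k → γ (k + 1) i = (θ k) ^ 2 * γ (i + 1) i / (θ i) ^ 2 := by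
  intro k i hik
  refine eq_sq_mul_div_sq_of_mul_one_sub (fun k => (hθpos k).ne')
    (fun k => sq_eq_one_sub_mul_sq_of_eq_sqrt (hθrec k)) (fun k i hik => ?_) hik
  exact hγrec (k + 1) (Nat.le_add_left 1 k) i hik

theorem stmt_12 (c : ℝ) (hc : 1 ≤ c) (θ0 : ℝ) (hθ0 : θ0 = 1 / c)
    (θ : ℕ → ℝ) (hθinit : θ 0 = θ0)
    (hθrec : ∀ k : ℕ, θ (k + 1) = (Real.sqrt ((θ k) ^ 4 + 4 * (θ k) ^ 2) - (θ k) ^ 2) / 2)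
    (hθpos : ∀ k : ℕ, 0 < θ k)
    (γ : ℕ → ℕ → ℝ)
    (hγ00 : γ 0 0 = 1) (hγ10 : γ 1 0 = 0) (hγ11 : γ 1 1 = 1)
    (hγrec : ∀ k : ℕ, 1 ≤ k → ∀ i : ℕ, i ≤ k - 1 → γ (k + 1) i = (1 - θ k) * γ k i)
    (hγk : ∀ k : ℕ, 1 ≤ k →
      γ (k + 1) k = θ k * (1 - c * θ (k - 1)) + c * (θ (k - 1) - θ k))
    (hγk1 : ∀ k : ℕ, 1 ≤ k → γ (k + 1) (k + 1) = c * θ k)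
      :
    ∀ k : ℕ, ∀ i : ℕ, i ≤ k → γ (k + 1) i = (θ k) ^ 2 * γ (i + 1) i / (θ i) ^ 2 :=
  stmt_12_general θ hθrec hθpos γ hγrec
end

section
/- Define ξ_k = ∑_{i=0}^k γ_k^i/θ_{i−1}² for k ≥ 1, with the convention 1/θ_{−1}² := (1−θ0)/θ0². Then for every k ≥ 1, ξ_{k+1} = (1−θ_k)·ξ_k + (1 + (c−1)·θ_k)/θ_k. -/
/-!
Write `w_i` for the weight `1/θ_{i-1}²`. Going from `ξ_k` to `ξ_{k+1}`, every coefficient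
`γ^i` with `i < k` is multiplied by `1 - θ_k`, so the recursion reduces to an identity between the
terms with `i = k, k + 1`. That identity holds because `θ_{k+1}` is the positive root of
`s² + θ_k² s - θ_k² = 0`, i.e. `θ_{k+1}² = θ_k² (1 - θ_{k+1})`.
-/

open Finset

noncomputable def momentumStep (t : ℝ) : ℝ := (√(t ^ 4 + 4 * t ^ 2) - t ^ 2) / 2

lemma momentumStep_sq (t : ℝ) : momentumStep t ^ 2 = t ^ 2 * (1 - momentumStep t) := by
  have hsqrt : √(t ^ 4 + 4 * t ^ 2) ^ 2 = t ^ 4 + 4 * t ^ 2 := Real.sq_sqrt (by positivity)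
  unfold momentumStep
  linear_combination hsqrt / 4

lemma last_terms_identity {c p t : ℝ} (hp : p ≠ 0) (ht : t ≠ 0)
    (h : t ^ 2 = p ^ 2 * (1 - t)) :
    (t * (1 - c * p) + c * (p - t)) / p ^ 2 + c * t / t ^ 2
      = (1 - t) * (c * p / p ^ 2) + (1 + (c - 1) * t) / t := by
  field_simp
  linear_combination (1 - c) * h

theorem stmt_13_general (c : ℝ) (hc : 1 ≤ c) (θ0 : ℝ) (hθ0 : θ0 = 1 / c)
    (θ : ℕ → ℝ) (hθinit : θ 0 = θ0)
    (hθrec : ∀ k : ℕ, θ (k + 1) = (Real.sqrt ((θ k) ^ 4 + 4 * (θ k) ^ 2) - (θ k) ^ 2) / 2)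
    (hθpos : ∀ k : ℕ, 0 < θ k)
    (γ : ℕ → ℕ → ℝ)
    (hγ11 : γ 1 1 = 1)
    (hγrec : ∀ k : ℕ, 1 ≤ k → ∀ i : ℕ, i ≤ k - 1 → γ (k + 1) i = (1 - θ k) * γ k i)
    (hγk : ∀ k : ℕ, 1 ≤ k →
      γ (k + 1) k = θ k * (1 - c * θ (k - 1)) + c * (θ (k - 1) - θ k))
    (hγk1 : ∀ k : ℕ, 1 ≤ k → γ (k + 1) (k + 1) = c * θ k)
    (ξ : ℕ → ℝ)
    (hξ : ∀ k : ℕ, ξ k = ∑ i ∈ Finset.range (k + 1),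
      γ k i * (if i = 0 then (1 - θ0) / θ0 ^ 2 else 1 / (θ (i - 1)) ^ 2))  :
    ∀ k : ℕ, 1 ≤ k → ξ (k + 1) = (1 - θ k) * ξ k + (1 + (c - 1) * θ k) / θ k := by
  intro k hk
  obtain ⟨j, rfl⟩ : ∃ j, k = j + 1 := ⟨k - 1, by omega⟩
  set w : ℕ → ℝ := fun i => if i = 0 then (1 - θ0) / θ0 ^ 2 else 1 / θ (i - 1) ^ 2
  have hξw : ∀ k, ξ k = ∑ i ∈ range (k + 1), γ k i * w i := hξ
  have hw : ∀ i, w (i + 1) = 1 / θ i ^ 2 := fun i => by simp [w]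
  have hdiag : γ (j + 1) (j + 1) = c * θ j := by
    rcases j with _ | n
    · rw [hγ11, hθinit, hθ0, mul_one_div_cancel (by linarith)]
    · exact hγk1 (n + 1) (by omega)
  have hhead : ∑ i ∈ range (j + 1), γ (j + 1 + 1) i * w i
      = (1 - θ (j + 1)) * ∑ i ∈ range (j + 1), γ (j + 1) i * w i := by
    rw [mul_sum]
    refine sum_congr rfl fun i hi => ?_
    rw [hγrec (j + 1) (by omega) i (Nat.le_of_lt_succ (mem_range.mp hi)), mul_assoc]
  have hlast := last_terms_identity (c := c) (hθpos j).ne' (hθpos (j + 1)).ne'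
    (by rw [hθrec j]; exact momentumStep_sq (θ j))
  rw [hξw, hξw, sum_range_succ _ (j + 1 + 1), sum_range_succ _ (j + 1), sum_range_succ _ (j + 1),
    hhead, hw, hw, hdiag, hγk (j + 1) (by omega), hγk1 (j + 1) (by omega), Nat.add_sub_cancel]
  linear_combination hlast

theorem stmt_13 (c : ℝ) (hc : 1 ≤ c) (θ0 : ℝ) (hθ0 : θ0 = 1 / c)
    (θ : ℕ → ℝ) (hθinit : θ 0 = θ0)
    (hθrec : ∀ k : ℕ, θ (k + 1) = (Real.sqrt ((θ k) ^ 4 + 4 * (θ k) ^ 2) - (θ k) ^ 2) / 2)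
    (hθpos : ∀ k : ℕ, 0 < θ k)
    (γ : ℕ → ℕ → ℝ)
    (hγ00 : γ 0 0 = 1) (hγ10 : γ 1 0 = 0) (hγ11 : γ 1 1 = 1)
    (hγrec : ∀ k : ℕ, 1 ≤ k → ∀ i : ℕ, i ≤ k - 1 → γ (k + 1) i = (1 - θ k) * γ k i)
    (hγk : ∀ k : ℕ, 1 ≤ k →
      γ (k + 1) k = θ k * (1 - c * θ (k - 1)) + c * (θ (k - 1) - θ k))
    (hγk1 : ∀ k : ℕ, 1 ≤ k → γ (k + 1) (k + 1) = c * θ k)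
    (ξ : ℕ → ℝ)
    (hξ : ∀ k : ℕ, ξ k = ∑ i ∈ Finset.range (k + 1),
      γ k i * (if i = 0 then (1 - θ0) / θ0 ^ 2 else 1 / (θ (i - 1)) ^ 2))  :
    ∀ k : ℕ, 1 ≤ k → ξ (k + 1) = (1 - θ k) * ξ k + (1 + (c - 1) * θ k) / θ k :=
  stmt_13_general c hc θ0 hθ0 θ hθinit hθrec hθpos γ hγ11 hγrec hγk hγk1 ξ hξ
end

section
/- For every k ≥ 1 one has 1/(3·θ_k²) ≤ ξ_k ≤ 1/θ_k². -/
/-!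
The recursion for `θ` says `θ_{k+1}² + θ_k² θ_{k+1} = θ_k²`, i.e. `1/θ_{k+1}² = 1/θ_k² + 1/θ_{k+1}`,
so `θ` decreases from `1/c`. Peeling the last two terms off the sum defining `ξ_{k+1}` and
using this identity gives `ξ_{k+1} = (1 - θ_k) ξ_k + (1 - θ_k)/θ_k + c`. If `ξ_k` lies in
`[1/(3θ_k²), 1/θ_k²]`, the upper bound for `ξ_{k+1}` then amounts to `c ≤ 1/θ_{k+1}` and the
lower bound to `θ_k ≤ 2 θ_{k+1}`, which holds as `θ_k ≤ 1`.
-/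

open Finset

section ThetaStep

variable {s t : ℝ}

lemma sq_add_sq_mul_eq_of_eq_sqrt (h : s = (√(t ^ 4 + 4 * t ^ 2) - t ^ 2) / 2) :
    s ^ 2 + t ^ 2 * s = t ^ 2 := by
  have := Real.sq_sqrt (by positivity : (0 : ℝ) ≤ t ^ 4 + 4 * t ^ 2)
  subst h
  nlinarith

lemma lt_one_of_sq_add_sq_mul_eq (h : s ^ 2 + t ^ 2 * s = t ^ 2) (hs : 0 < s) : s < 1 := by
  nlinarith [mul_nonneg (sq_nonneg t) hs.le]

lemma le_of_sq_add_sq_mul_eq (h : s ^ 2 + t ^ 2 * s = t ^ 2) (hs : 0 < s) (ht : 0 < t) :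
    s ≤ t := by
  nlinarith [mul_pos (mul_pos ht ht) hs]

lemma le_two_mul_of_sq_add_sq_mul_eq (h : s ^ 2 + t ^ 2 * s = t ^ 2) (hs : 0 < s) (ht1 : t ≤ 1) :
    t ≤ 2 * s := by
  nlinarith [sq_nonneg (t - 2 * s), sq_nonneg t]

lemma one_div_sq_eq_of_sq_add_sq_mul_eq (h : s ^ 2 + t ^ 2 * s = t ^ 2) (hs : 0 < s)
    (ht : 0 < t) : 1 / s ^ 2 = 1 / t ^ 2 + 1 / s := by
  field_simp
  linarith

end ThetaStep

lemma one_div_sq_bounds_step {a b c x : ℝ} (ha : 0 < a) (ha1 : a ≤ 1) (hb : 0 < b)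
    (hab : b ^ 2 + a ^ 2 * b = a ^ 2) (hc : 1 ≤ c) (hcb : c * b ≤ 1)
    (hx : 1 / (3 * a ^ 2) ≤ x ∧ x ≤ 1 / a ^ 2) :
    1 / (3 * b ^ 2) ≤ (1 - a) * x + (1 - a) / a + c ∧
      (1 - a) * x + (1 - a) / a + c ≤ 1 / b ^ 2 := by
  have hinv := one_div_sq_eq_of_sq_add_sq_mul_eq hab hb ha
  have ha' : 0 ≤ 1 - a := by linarith
  constructor
  · have h2b : 1 / (3 * b) ≤ 2 / (3 * a) := by
      rw [div_le_div_iff₀ (by positivity) (by positivity)]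
      linarith [le_two_mul_of_sq_add_sq_mul_eq hab hb ha1]
    calc 1 / (3 * b ^ 2) = 1 / (3 * a ^ 2) + 1 / (3 * b) := by
          rw [show 1 / (3 * b ^ 2) = 1 / b ^ 2 / 3 by ring, hinv]; ring
      _ ≤ 1 / (3 * a ^ 2) + 2 / (3 * a) + (c - 1) := by linarith
      _ = (1 - a) * (1 / (3 * a ^ 2)) + (1 - a) / a + c := by field_simp; ring
      _ ≤ (1 - a) * x + (1 - a) / a + c := by gcongr; exact hx.1
  · have hcb' : c ≤ 1 / b := by rw [le_div_iff₀ hb]; exact hcb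
    calc (1 - a) * x + (1 - a) / a + c ≤ (1 - a) * (1 / a ^ 2) + (1 - a) / a + c := by
          gcongr; exact hx.2
      _ = 1 / a ^ 2 + (c - 1) := by field_simp; ring
      _ ≤ 1 / b ^ 2 := by linarith

lemma sum_range_add_three_eq {γ : ℕ → ℕ → ℝ} {w : ℕ → ℝ} {c p a : ℝ} {m : ℕ}
    (hp : 0 < p) (ha : 0 < a) (hpa : a ^ 2 + p ^ 2 * a = p ^ 2)
    (hw₁ : w (m + 1) = 1 / p ^ 2) (hw₂ : w (m + 2) = 1 / a ^ 2)
    (hγ : ∀ i ≤ m, γ (m + 2) i = (1 - a) * γ (m + 1) i)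
    (hγ₁₁ : γ (m + 1) (m + 1) = c * p)
    (hγ₂₁ : γ (m + 2) (m + 1) = a * (1 - c * p) + c * (p - a))
    (hγ₂₂ : γ (m + 2) (m + 2) = c * a) :
    ∑ i ∈ range (m + 3), γ (m + 2) i * w i =
      (1 - a) * ∑ i ∈ range (m + 2), γ (m + 1) i * w i + (1 - a) / a + c := by
  have hhead : ∑ i ∈ range (m + 1), γ (m + 2) i * w i =
      (1 - a) * ∑ i ∈ range (m + 1), γ (m + 1) i * w i := by
    rw [mul_sum]
    refine sum_congr rfl fun i hi => ?_
    rw [hγ i (Nat.lt_succ_iff.mp (mem_range.mp hi)), mul_assoc]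
  rw [sum_range_succ _ (m + 2), sum_range_succ _ (m + 1), sum_range_succ _ (m + 1), hhead,
    hw₁, hw₂, hγ₁₁, hγ₂₁, hγ₂₂]
  field_simp
  linear_combination (1 - c) * hpa

theorem stmt_14_general (c : ℝ) (hc : 1 ≤ c) (θ0 : ℝ) (hθ0 : θ0 = 1 / c)
    (θ : ℕ → ℝ) (hθinit : θ 0 = θ0)
    (hθrec : ∀ k : ℕ, θ (k + 1) = (Real.sqrt ((θ k) ^ 4 + 4 * (θ k) ^ 2) - (θ k) ^ 2) / 2)
    (hθpos : ∀ k : ℕ, 0 < θ k)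
    (γ : ℕ → ℕ → ℝ)
    (hγ10 : γ 1 0 = 0) (hγ11 : γ 1 1 = 1)
    (hγrec : ∀ k : ℕ, 1 ≤ k → ∀ i : ℕ, i ≤ k - 1 → γ (k + 1) i = (1 - θ k) * γ k i)
    (hγk : ∀ k : ℕ, 1 ≤ k →
      γ (k + 1) k = θ k * (1 - c * θ (k - 1)) + c * (θ (k - 1) - θ k))
    (hγk1 : ∀ k : ℕ, 1 ≤ k → γ (k + 1) (k + 1) = c * θ k)
    (ξ : ℕ → ℝ)
    (hξ : ∀ k : ℕ, ξ k = ∑ i ∈ Finset.range (k + 1),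
      γ k i * (if i = 0 then (1 - θ0) / θ0 ^ 2 else 1 / (θ (i - 1)) ^ 2))  :
    ∀ k : ℕ, 1 ≤ k → 1 / (3 * (θ k) ^ 2) ≤ ξ k ∧ ξ k ≤ 1 / (θ k) ^ 2 := by
  have hθstep k := sq_add_sq_mul_eq_of_eq_sqrt (hθrec k)
  have hθanti : Antitone θ :=
    antitone_nat_of_succ_le fun k => le_of_sq_add_sq_mul_eq (hθstep k) (hθpos _) (hθpos k)
  have hcθ0 : c * θ 0 = 1 := by rw [hθinit, hθ0]; field_simp
  have hcθ k : c * θ k ≤ 1 := hcθ0 ▸ by gcongr; exact hθanti k.zero_le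
  have hθle1 k : θ k ≤ 1 := by nlinarith [hcθ k, hθpos k]
  have hξrec m : ξ (m + 2) = (1 - θ (m + 1)) * ξ (m + 1) + (1 - θ (m + 1)) / θ (m + 1) + c := by
    rw [hξ, hξ]
    refine sum_range_add_three_eq (hθpos m) (hθpos _) (hθstep m) (by simp) (by simp)
      (fun i hi => hγrec (m + 1) (by omega) i (by omega)) ?_ (hγk (m + 1) (by omega))
      (hγk1 (m + 1) (by omega))
    cases m with
    | zero => rw [hγ11, hcθ0]
    | succ m => exact hγk1 (m + 1) (by omega)
  intro k hk
  induction k, hk using Nat.le_induction with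
  | base =>
    have hξ1 : ξ 1 = 1 / θ 0 ^ 2 := by simp [hξ, sum_range_succ, hγ10, hγ11]
    -- with `c = 1`, the map `x ↦ (1 - θ₀) x + (1 - θ₀)/θ₀ + c` fixes `1/θ₀²`
    have h := one_div_sq_bounds_step (hθpos 0) (hθle1 0) (hθpos 1) (hθstep 0) le_rfl
      (by linarith [lt_one_of_sq_add_sq_mul_eq (hθstep 0) (hθpos 1)])
      (x := 1 / θ 0 ^ 2) ⟨by gcongr <;> nlinarith [hθpos 0], le_rfl⟩
    rwa [show (1 - θ 0) * (1 / θ 0 ^ 2) + (1 - θ 0) / θ 0 + 1 = 1 / θ 0 ^ 2 by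
      field_simp [(hθpos 0).ne']; ring, ← hξ1] at h
  | succ n hn ih =>
    obtain ⟨m, rfl⟩ := Nat.exists_eq_add_of_le' hn
    rw [hξrec]
    exact one_div_sq_bounds_step (hθpos _) (hθle1 _) (hθpos _) (hθstep _) hc (hcθ _) ih

theorem stmt_14 (c : ℝ) (hc : 1 ≤ c) (θ0 : ℝ) (hθ0 : θ0 = 1 / c)
    (θ : ℕ → ℝ) (hθinit : θ 0 = θ0)
    (hθrec : ∀ k : ℕ, θ (k + 1) = (Real.sqrt ((θ k) ^ 4 + 4 * (θ k) ^ 2) - (θ k) ^ 2) / 2)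
    (hθpos : ∀ k : ℕ, 0 < θ k)
    (γ : ℕ → ℕ → ℝ)
    (hγ00 : γ 0 0 = 1) (hγ10 : γ 1 0 = 0) (hγ11 : γ 1 1 = 1)
    (hγrec : ∀ k : ℕ, 1 ≤ k → ∀ i : ℕ, i ≤ k - 1 → γ (k + 1) i = (1 - θ k) * γ k i)
    (hγk : ∀ k : ℕ, 1 ≤ k →
      γ (k + 1) k = θ k * (1 - c * θ (k - 1)) + c * (θ (k - 1) - θ k))
    (hγk1 : ∀ k : ℕ, 1 ≤ k → γ (k + 1) (k + 1) = c * θ k)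
    (ξ : ℕ → ℝ)
    (hξ : ∀ k : ℕ, ξ k = ∑ i ∈ Finset.range (k + 1),
      γ k i * (if i = 0 then (1 - θ0) / θ0 ^ 2 else 1 / (θ (i - 1)) ^ 2))  :
    ∀ k : ℕ, 1 ≤ k → 1 / (3 * (θ k) ^ 2) ≤ ξ k ∧ ξ k ≤ 1 / (θ k) ^ 2 :=
  stmt_14_general c hc θ0 hθ0 θ hθinit hθrec hθpos γ hγ10 hγ11 hγrec hγk hγk1 ξ hξ
end

section
/- For every k ≥ 1 one has (k + 2/θ0)²/12 ≤ ξ_k ≤ (k + 1/θ0)². -/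
/-!
With `u_k = 1/θ_k` the recursion for `θ` becomes `u_{k+1}^2 - u_{k+1} = u_k^2`, whence
`u_k + 1/2 ≤ u_{k+1} ≤ u_k + 1` and `c + k/2 ≤ u_k ≤ c + k`. Using
`1/θ_{k-1}^2 = (1 - θ_k)/θ_k^2`, the recursion for `γ` telescopes into
`ξ_{k+1} = (1 - θ_k) ξ_k + 1/θ_k + c - 1` with `ξ_1 = c^2`, and both bounds propagate
through this recursion by induction.
-/

open Finset

lemma half_sqrt_sub_sq_sq_eq (t : ℝ) :
    ((√(t ^ 4 + 4 * t ^ 2) - t ^ 2) / 2) ^ 2 = t ^ 2 * (1 - (√(t ^ 4 + 4 * t ^ 2) - t ^ 2) / 2) := by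
  have h := Real.sq_sqrt (by positivity : (0 : ℝ) ≤ t ^ 4 + 4 * t ^ 2)
  linear_combination h / 4

lemma inv_add_half_le_inv_and_inv_le_inv_add_one {t s : ℝ} (ht : 0 < t) (hs : 0 < s)
    (h : s ^ 2 = t ^ 2 * (1 - s)) : 1 / t + 1 / 2 ≤ 1 / s ∧ 1 / s ≤ 1 / t + 1 := by
  have hv : (1 / s) ^ 2 - 1 / s = (1 / t) ^ 2 := by
    field_simp
    linear_combination -h
  set u := 1 / t
  set v := 1 / s
  have hu : 0 < u := by positivity
  have hv1 : 1 < v := by nlinarith [sq_pos_of_pos hu, (by positivity : 0 < v)]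
  constructor <;> nlinarith

lemma inv_bounds_of_sq_eq {θ : ℕ → ℝ} (hθ : ∀ k, 0 < θ k)
    (h : ∀ k, θ (k + 1) ^ 2 = θ k ^ 2 * (1 - θ (k + 1))) (k : ℕ) :
    1 / θ 0 + k / 2 ≤ 1 / θ k ∧ 1 / θ k ≤ 1 / θ 0 + k := by
  induction k with
  | zero => simp
  | succ k ih =>
    have := inv_add_half_le_inv_and_inv_le_inv_add_one (hθ k) (hθ (k + 1)) (h k)
    push_cast
    constructor <;> linarith [ih.1, ih.2, this.1, this.2]

/-- One step of the recursion for `∑ γ_k^i / θ_{i-1}^2`, with `t = θ_{n-1}`, `s = θ_n`,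
`γ = γ_n` and `γ' = γ_{n+1}`. -/
lemma sum_mul_weight_step {γ γ' w : ℕ → ℝ} {n : ℕ} {t s c : ℝ} (ht : t ≠ 0) (hs : s ≠ 0)
    (hts : s ^ 2 = t ^ 2 * (1 - s)) (hγ' : ∀ i < n, γ' i = (1 - s) * γ i)
    (hγn : γ n = c * t) (hγ'n : γ' n = s * (1 - c * t) + c * (t - s)) (hγ'n1 : γ' (n + 1) = c * s)
    (hwn : w n = 1 / t ^ 2) (hwn1 : w (n + 1) = 1 / s ^ 2) :
    ∑ i ∈ range (n + 2), γ' i * w i = (1 - s) * ∑ i ∈ range (n + 1), γ i * w i + 1 / s + c - 1 := by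
  have hprefix : ∑ i ∈ range n, γ' i * w i = (1 - s) * ∑ i ∈ range n, γ i * w i := by
    rw [mul_sum]
    refine sum_congr rfl fun i hi => ?_
    rw [hγ' i (mem_range.mp hi), mul_assoc]
  have hinv : 1 / t ^ 2 = (1 - s) / s ^ 2 := by
    rw [div_eq_div_iff (pow_ne_zero 2 ht) (pow_ne_zero 2 hs)]
    linear_combination hts
  rw [sum_range_succ, sum_range_succ, sum_range_succ, hprefix, hγn, hγ'n, hγ'n1, hwn, hwn1, hinv]
  field_simp
  ring

lemma lower_bound_step {t x c B : ℝ} (hc : 1 ≤ c) (hcB : 2 * c ≤ B) (ht : 0 < t) (ht1 : t ≤ 1)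
    (hBt : B / 2 ≤ 1 / t) (hx : B ^ 2 / 12 ≤ x) :
    (B + 1) ^ 2 / 12 ≤ (1 - t) * x + 1 / t + c - 1 := by
  have htB : B * t ≤ 2 := by
    have := mul_le_mul_of_nonneg_right hBt ht.le
    rw [one_div_mul_cancel ht.ne'] at this
    linarith
  have hx' := mul_le_mul_of_nonneg_left hx (sub_nonneg.mpr ht1)
  have htB' := mul_le_mul_of_nonneg_right htB (by linarith : 0 ≤ B)
  linarith

lemma upper_bound_step {t x c A : ℝ} (hcA : c ≤ A) (ht : 0 < t) (ht1 : t ≤ 1)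
    (hAt : 1 / t ≤ A) (hx : x ≤ A ^ 2) :
    (1 - t) * x + 1 / t + c - 1 ≤ (A + 1) ^ 2 := by
  nlinarith [mul_le_mul_of_nonneg_left hx (sub_nonneg.mpr ht1), mul_nonneg ht.le (sq_nonneg A)]

lemma bounds_of_recurrence {c : ℝ} (hc : 1 ≤ c) {θ ξ : ℕ → ℝ} (hθ : ∀ k, 0 < θ k)
    (hinv : ∀ k : ℕ, c + k / 2 ≤ 1 / θ k ∧ 1 / θ k ≤ c + k) (h1 : ξ 1 = c ^ 2)
    (hrec : ∀ k, 1 ≤ k → ξ (k + 1) = (1 - θ k) * ξ k + 1 / θ k + c - 1) :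
    ∀ k : ℕ, 1 ≤ k → ((k : ℝ) + 2 * c) ^ 2 / 12 ≤ ξ k ∧ ξ k ≤ ((k : ℝ) + c) ^ 2 := by
  intro k hk
  induction k, hk using Nat.le_induction with
  | base => rw [h1]; push_cast; constructor <;> nlinarith
  | succ k hk ih =>
    obtain ⟨hlo, hhi⟩ := hinv k
    have ht1 : θ k ≤ 1 := (one_le_div₀ (hθ k)).mp (by linarith [k.cast_nonneg (α := ℝ)])
    rw [hrec k hk]
    push_cast
    constructor
    · calc ((k : ℝ) + 1 + 2 * c) ^ 2 / 12 = ((k + 2 * c) + 1) ^ 2 / 12 := by ring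
        _ ≤ _ := lower_bound_step hc (by linarith) (hθ k) ht1 (by linarith) ih.1
    · calc _ ≤ ((k + c) + 1) ^ 2 := upper_bound_step (by linarith) (hθ k) ht1 (by linarith) ih.2
        _ = ((k : ℝ) + 1 + c) ^ 2 := by ring

theorem stmt_15_general (c : ℝ) (hc : 1 ≤ c) (θ0 : ℝ) (hθ0 : θ0 = 1 / c)
    (θ : ℕ → ℝ) (hθinit : θ 0 = θ0)
    (hθrec : ∀ k : ℕ, θ (k + 1) = (Real.sqrt ((θ k) ^ 4 + 4 * (θ k) ^ 2) - (θ k) ^ 2) / 2)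
    (hθpos : ∀ k : ℕ, 0 < θ k)
    (γ : ℕ → ℕ → ℝ)
    (hγ10 : γ 1 0 = 0) (hγ11 : γ 1 1 = 1)
    (hγrec : ∀ k : ℕ, 1 ≤ k → ∀ i : ℕ, i ≤ k - 1 → γ (k + 1) i = (1 - θ k) * γ k i)
    (hγk : ∀ k : ℕ, 1 ≤ k →
      γ (k + 1) k = θ k * (1 - c * θ (k - 1)) + c * (θ (k - 1) - θ k))
    (hγk1 : ∀ k : ℕ, 1 ≤ k → γ (k + 1) (k + 1) = c * θ k)
    (ξ : ℕ → ℝ)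
    (hξ : ∀ k : ℕ, ξ k = ∑ i ∈ Finset.range (k + 1),
      γ k i * (if i = 0 then (1 - θ0) / θ0 ^ 2 else 1 / (θ (i - 1)) ^ 2))  :
    ∀ k : ℕ, 1 ≤ k → ((k : ℝ) + 2 / θ0) ^ 2 / 12 ≤ ξ k ∧ ξ k ≤ ((k : ℝ) + 1 / θ0) ^ 2 := by
  have hc0 : c ≠ 0 := by positivity
  have hθ0c : 1 / θ0 = c := by rw [hθ0, one_div_one_div]
  have hsq : ∀ k, θ (k + 1) ^ 2 = θ k ^ 2 * (1 - θ (k + 1)) := fun k => by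
    rw [hθrec]; exact half_sqrt_sub_sq_sq_eq _
  have hinv : ∀ k : ℕ, c + k / 2 ≤ 1 / θ k ∧ 1 / θ k ≤ c + k := fun k => by
    simpa [hθinit, hθ0c] using inv_bounds_of_sq_eq hθpos hsq k
  have hdiag : ∀ m, γ (m + 1) (m + 1) = c * θ m
    | 0 => by rw [hγ11, hθinit, hθ0, mul_one_div_cancel hc0]
    | m + 1 => hγk1 (m + 1) m.succ_pos
  have hξ1 : ξ 1 = c ^ 2 := by
    simp [hξ, sum_range_succ, hγ10, hγ11, hθinit, hθ0]
  have hrec : ∀ k, 1 ≤ k → ξ (k + 1) = (1 - θ k) * ξ k + 1 / θ k + c - 1 := by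
    intro k hk
    obtain ⟨m, rfl⟩ : ∃ m, k = m + 1 := ⟨k - 1, by omega⟩
    rw [hξ, hξ]
    exact sum_mul_weight_step (hθpos m).ne' (hθpos (m + 1)).ne' (hsq m)
      (fun i hi => hγrec _ hk i (by omega)) (hdiag m) (hγk _ hk) (hdiag (m + 1))
      (by simp) (by simp)
  rw [hθ0c, hθ0, div_div_eq_mul_div, div_one]
  exact bounds_of_recurrence hc hθpos hinv hξ1 hrec

theorem stmt_15 (c : ℝ) (hc : 1 ≤ c) (θ0 : ℝ) (hθ0 : θ0 = 1 / c)
    (θ : ℕ → ℝ) (hθinit : θ 0 = θ0)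
    (hθrec : ∀ k : ℕ, θ (k + 1) = (Real.sqrt ((θ k) ^ 4 + 4 * (θ k) ^ 2) - (θ k) ^ 2) / 2)
    (hθpos : ∀ k : ℕ, 0 < θ k)
    (γ : ℕ → ℕ → ℝ)
    (hγ00 : γ 0 0 = 1) (hγ10 : γ 1 0 = 0) (hγ11 : γ 1 1 = 1)
    (hγrec : ∀ k : ℕ, 1 ≤ k → ∀ i : ℕ, i ≤ k - 1 → γ (k + 1) i = (1 - θ k) * γ k i)
    (hγk : ∀ k : ℕ, 1 ≤ k →
      γ (k + 1) k = θ k * (1 - c * θ (k - 1)) + c * (θ (k - 1) - θ k))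
    (hγk1 : ∀ k : ℕ, 1 ≤ k → γ (k + 1) (k + 1) = c * θ k)
    (ξ : ℕ → ℝ)
    (hξ : ∀ k : ℕ, ξ k = ∑ i ∈ Finset.range (k + 1),
      γ k i * (if i = 0 then (1 - θ0) / θ0 ^ 2 else 1 / (θ (i - 1)) ^ 2))  :
    ∀ k : ℕ, 1 ≤ k → ((k : ℝ) + 2 / θ0) ^ 2 / 12 ≤ ξ k ∧ ξ k ≤ ((k : ℝ) + 1 / θ0) ^ 2 :=
  stmt_15_general c hc θ0 hθ0 θ hθinit hθrec hθpos γ hγ10 hγ11 hγrec hγk hγk1 ξ hξ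
end

section
/- Let μ, λ be real numbers with 0 < μ ≤ λ, and let K = ⌈(2√3/θ0)·√(λ/μ) − 2/θ0⌉ (a natural number, and K ≥ 1). Then λ ≤ μ·θ0²·ξ_K ≤ 12·λ, and K ≤ 2√3·√λ/(θ0·√μ). -/
/-!
Writing `u_k = 1/θ_k`, the recursion for `θ` reads `u_{k+1}² = u_k² + u_{k+1}`, whence
`u_k + 1/2 ≤ u_{k+1} ≤ u_k + 1` and so `c + k/2 ≤ u_k ≤ c + k`. Since `γ_{k+1}` agrees with
`(1 - θ_k) γ_k` except in its last two entries, `ξ` obeys the scalar recursion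
`ξ_{k+1} = (1 - θ_k) ξ_k + u_k + c - 1` with `ξ_1 = c²`, and induction gives
`(k + 2c)²/12 ≤ ξ_k ≤ (k + c)²`. Multiplied by `θ0² = 1/c²` these read
`(θ0 k + 2)²/12 ≤ θ0² ξ_k ≤ (θ0 k + 1)²`, and the ceiling defining `K` is chosen so that
`θ0 K + 1 ≤ 2√3 √(λ/μ) ≤ θ0 K + 2`.
-/

open Finset

namespace NesterovTheta

lemma sq_add_sq_mul_eq_of_eq_sqrt {t s : ℝ} (h : s = (√(t ^ 4 + 4 * t ^ 2) - t ^ 2) / 2) :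
    s ^ 2 + t ^ 2 * s = t ^ 2 := by
  have hsqrt : √(t ^ 4 + 4 * t ^ 2) = 2 * s + t ^ 2 := by linarith
  have hsq := Real.sq_sqrt (show 0 ≤ t ^ 4 + 4 * t ^ 2 by positivity)
  rw [hsqrt] at hsq
  linear_combination hsq / 4

lemma inv_sq_eq_inv_sq_add_inv {t s : ℝ} (ht : 0 < t) (hs : 0 < s) (h : s ^ 2 + t ^ 2 * s = t ^ 2) :
    (1 / s) ^ 2 = (1 / t) ^ 2 + 1 / s := by
  field_simp
  linear_combination -h

lemma add_half_le_of_sq_eq_sq_add {u v : ℝ} (hu : 0 < u) (hv : 0 < v) (h : v ^ 2 = u ^ 2 + v) :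
    u + 1 / 2 ≤ v := by
  have hv1 : 1 < v := by nlinarith
  nlinarith

lemma le_add_one_of_sq_eq_sq_add {u v : ℝ} (hu : 0 < u) (hv : 0 < v) (h : v ^ 2 = u ^ 2 + v) :
    v ≤ u + 1 := by
  nlinarith

lemma inv_bounds_of_inv_sq_succ {θ : ℕ → ℝ} (hpos : ∀ k, 0 < θ k)
    (hrec : ∀ k, (1 / θ (k + 1)) ^ 2 = (1 / θ k) ^ 2 + 1 / θ (k + 1)) (k : ℕ) :
    1 / θ 0 + k / 2 ≤ 1 / θ k ∧ 1 / θ k ≤ 1 / θ 0 + k := by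
  induction k with
  | zero => simp
  | succ n ih =>
    have hu := one_div_pos.2 (hpos n)
    have hv := one_div_pos.2 (hpos (n + 1))
    have := add_half_le_of_sq_eq_sq_add hu hv (hrec n)
    have := le_add_one_of_sq_eq_sq_add hu hv (hrec n)
    push_cast
    constructor <;> linarith [ih.1, ih.2]

lemma sum_range_add_two_eq {γ : ℕ → ℕ → ℝ} {w : ℕ → ℝ} {a : ℝ} {k : ℕ}
    (h : ∀ i < k, γ (k + 1) i = a * γ k i) :
    ∑ i ∈ range (k + 1 + 1), γ (k + 1) i * w i =
      a * ∑ i ∈ range (k + 1), γ k i * w i + (γ (k + 1) k - a * γ k k) * w k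
        + γ (k + 1) (k + 1) * w (k + 1) := by
  rw [sum_range_succ, sum_range_succ, sum_range_succ, mul_add, mul_sum,
    sum_congr rfl fun i hi => by rw [h i (mem_range.1 hi), mul_assoc]]
  ring

lemma increment_eq {c x y : ℝ} (hx : 0 < x) (hy : 0 < y) (h : (1 / y) ^ 2 = (1 / x) ^ 2 + 1 / y) :
    (y * (1 - c * x) + c * (x - y) - (1 - y) * (c * x)) * (1 / x ^ 2) + c * y * (1 / y ^ 2)
      = 1 / y + c - 1 := by
  field_simp at h ⊢
  linear_combination (c - 1) * h


lemma diag_eq {c : ℝ} {θ : ℕ → ℝ} {γ : ℕ → ℕ → ℝ} (hcθ : c * θ 0 = 1) (hγ11 : γ 1 1 = 1)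
    (hγk1 : ∀ k : ℕ, 1 ≤ k → γ (k + 1) (k + 1) = c * θ k) {k : ℕ} (hk : 1 ≤ k) :
    γ k k = c * θ (k - 1) := by
  obtain _ | _ | k := k
  · omega
  · simpa [hγ11] using hcθ.symm
  · exact hγk1 (k + 1) (by omega)

lemma xi_succ_eq {c : ℝ} {θ w ξ : ℕ → ℝ} {γ : ℕ → ℕ → ℝ} (hpos : ∀ k, 0 < θ k)
    (hinv : ∀ k, (1 / θ (k + 1)) ^ 2 = (1 / θ k) ^ 2 + 1 / θ (k + 1)) (hcθ : c * θ 0 = 1)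
    (hγ11 : γ 1 1 = 1)
    (hγrec : ∀ k : ℕ, 1 ≤ k → ∀ i : ℕ, i ≤ k - 1 → γ (k + 1) i = (1 - θ k) * γ k i)
    (hγk : ∀ k : ℕ, 1 ≤ k →
      γ (k + 1) k = θ k * (1 - c * θ (k - 1)) + c * (θ (k - 1) - θ k))
    (hγk1 : ∀ k : ℕ, 1 ≤ k → γ (k + 1) (k + 1) = c * θ k)
    (hξ : ∀ k, ξ k = ∑ i ∈ range (k + 1), γ k i * w i)
    (hw : ∀ i, 1 ≤ i → w i = 1 / θ (i - 1) ^ 2) {k : ℕ} (hk : 1 ≤ k) :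
    ξ (k + 1) = (1 - θ k) * ξ k + 1 / θ k + c - 1 := by
  obtain ⟨m, rfl⟩ : ∃ m, k = m + 1 := ⟨k - 1, by omega⟩
  rw [hξ, hξ, sum_range_add_two_eq fun i hi => hγrec _ hk i (by omega), hγk _ hk, hγk1 _ hk,
    diag_eq hcθ hγ11 hγk1 hk, hw _ hk, hw _ (by omega)]
  simp only [Nat.add_sub_cancel]
  linear_combination increment_eq (c := c) (hpos m) (hpos (m + 1)) (hinv m)

lemma sq_div_twelve_le_of_succ_eq {c : ℝ} (hc : 1 ≤ c) {θ ξ : ℕ → ℝ} (hpos : ∀ k, 0 < θ k)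
    (hu : ∀ k : ℕ, c + k / 2 ≤ 1 / θ k) (h1 : ξ 1 = c ^ 2)
    (hrec : ∀ k, 1 ≤ k → ξ (k + 1) = (1 - θ k) * ξ k + 1 / θ k + c - 1) {k : ℕ} (hk : 1 ≤ k) :
    (k + 2 * c) ^ 2 / 12 ≤ ξ k := by
  induction k, hk using Nat.le_induction with
  | base => push_cast; nlinarith
  | succ n hn ih =>
    have hθ := hpos n
    have hθm : θ n * (n + 2 * c) ≤ 2 := by
      have := hu n
      rw [le_div_iff₀ hθ] at this
      linarith
    have hθ1 : θ n ≤ 1 := by nlinarith [(Nat.cast_nonneg n : (0 : ℝ) ≤ n)]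
    have hscaled : (1 - θ n) * ((n + 2 * c) ^ 2 / 12) ≤ (1 - θ n) * ξ n :=
      mul_le_mul_of_nonneg_left ih (by linarith)
    rw [hrec n hn]
    push_cast
    nlinarith [hu n, mul_le_mul_of_nonneg_right hθm (by positivity : (0 : ℝ) ≤ n + 2 * c)]

lemma le_sq_of_succ_eq {c : ℝ} (hc : 0 ≤ c) {θ ξ : ℕ → ℝ} (hpos : ∀ k, 0 < θ k)
    (hu : ∀ k : ℕ, 1 / θ k ≤ c + k) (h1 : ξ 1 = c ^ 2) (hnonneg : ∀ k, 1 ≤ k → 0 ≤ ξ k)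
    (hrec : ∀ k, 1 ≤ k → ξ (k + 1) = (1 - θ k) * ξ k + 1 / θ k + c - 1) {k : ℕ} (hk : 1 ≤ k) :
    ξ k ≤ (k + c) ^ 2 := by
  induction k, hk using Nat.le_induction with
  | base => push_cast; nlinarith
  | succ n hn ih =>
    rw [hrec n hn]
    push_cast
    nlinarith [hu n, mul_nonneg (hpos n).le (hnonneg n hn)]

lemma ceil_bounds {θ0 a : ℝ} (hθ0 : 0 < θ0) (hθ01 : θ0 ≤ 1) (ha : 1 ≤ a) {K : ℕ}
    (hK : K = ⌈2 * √3 / θ0 * a - 2 / θ0⌉₊) :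
    1 ≤ K ∧ 2 * √3 * a ≤ θ0 * K + 2 ∧ θ0 * K + 1 ≤ 2 * √3 * a := by
  have hx : 2 * √3 / θ0 * a - 2 / θ0 = (2 * √3 * a - 2) / θ0 := by ring
  have h3 : 1 < √3 := by rw [Real.lt_sqrt zero_le_one]; norm_num
  have hpos : 0 < 2 * √3 / θ0 * a - 2 / θ0 := by rw [hx]; apply div_pos _ hθ0; nlinarith
  have hge := Nat.le_ceil (2 * √3 / θ0 * a - 2 / θ0)
  have hlt := Nat.ceil_lt_add_one hpos.le
  rw [← hK, hx] at hge hlt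
  rw [div_le_iff₀' hθ0] at hge
  rw [← sub_lt_iff_lt_add, lt_div_iff₀' hθ0] at hlt
  exact ⟨hK ▸ Nat.one_le_ceil_iff.mpr hpos, by linarith, by nlinarith⟩

theorem scaled_xi_mem_Icc {c θ0 : ℝ} (hc : 1 ≤ c) (hθ0 : θ0 = 1 / c) {θ w ξ : ℕ → ℝ}
    {γ : ℕ → ℕ → ℝ} (hθinit : θ 0 = θ0)
    (hθrec : ∀ k : ℕ, θ (k + 1) = (√(θ k ^ 4 + 4 * θ k ^ 2) - θ k ^ 2) / 2)
    (hθpos : ∀ k : ℕ, 0 < θ k) (hγ10 : γ 1 0 = 0) (hγ11 : γ 1 1 = 1)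
    (hγrec : ∀ k : ℕ, 1 ≤ k → ∀ i : ℕ, i ≤ k - 1 → γ (k + 1) i = (1 - θ k) * γ k i)
    (hγk : ∀ k : ℕ, 1 ≤ k →
      γ (k + 1) k = θ k * (1 - c * θ (k - 1)) + c * (θ (k - 1) - θ k))
    (hγk1 : ∀ k : ℕ, 1 ≤ k → γ (k + 1) (k + 1) = c * θ k)
    (hξ : ∀ k, ξ k = ∑ i ∈ range (k + 1), γ k i * w i)
    (hw : ∀ i, 1 ≤ i → w i = 1 / θ (i - 1) ^ 2) {k : ℕ} (hk : 1 ≤ k) :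
    θ0 ^ 2 * ξ k ∈ Set.Icc ((θ0 * k + 2) ^ 2 / 12) ((θ0 * k + 1) ^ 2) := by
  have hcθ : c * θ 0 = 1 := by rw [hθinit, hθ0]; field_simp
  have hinv k := inv_sq_eq_inv_sq_add_inv (hθpos k) (hθpos (k + 1))
    (sq_add_sq_mul_eq_of_eq_sqrt (hθrec k))
  have hu := inv_bounds_of_inv_sq_succ hθpos hinv
  rw [show 1 / θ 0 = c by rw [hθinit, hθ0, one_div_one_div]] at hu
  have hrec k := xi_succ_eq (k := k) hθpos hinv hcθ hγ11 hγrec hγk hγk1 hξ hw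
  have hξ1 : ξ 1 = c ^ 2 := by
    simp [hξ, sum_range_succ, hγ10, hγ11, hw, hθinit, hθ0]
  have hlow k := sq_div_twelve_le_of_succ_eq (k := k) hc hθpos (fun k => (hu k).1) hξ1 hrec
  have hup := le_sq_of_succ_eq (by linarith) hθpos (fun k => (hu k).2) hξ1
    (fun k hk => (hlow k hk).trans' (by positivity)) hrec hk
  have hscale (d : ℝ) : θ0 ^ 2 * (k + d * c) ^ 2 = (θ0 * k + d) ^ 2 := by
    rw [hθ0]; field_simp
  constructor
  · rw [← hscale, mul_div_assoc]
    exact mul_le_mul_of_nonneg_left (hlow k hk) (sq_nonneg θ0)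
  · rw [← hscale, one_mul]
    exact mul_le_mul_of_nonneg_left hup (sq_nonneg θ0)

end NesterovTheta

open NesterovTheta in
theorem stmt_16_general (c : ℝ) (hc : 1 ≤ c) (θ0 : ℝ) (hθ0 : θ0 = 1 / c)
    (θ : ℕ → ℝ) (hθinit : θ 0 = θ0)
    (hθrec : ∀ k : ℕ, θ (k + 1) = (Real.sqrt ((θ k) ^ 4 + 4 * (θ k) ^ 2) - (θ k) ^ 2) / 2)
    (hθpos : ∀ k : ℕ, 0 < θ k)
    (γ : ℕ → ℕ → ℝ)
    (hγ10 : γ 1 0 = 0) (hγ11 : γ 1 1 = 1)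
    (hγrec : ∀ k : ℕ, 1 ≤ k → ∀ i : ℕ, i ≤ k - 1 → γ (k + 1) i = (1 - θ k) * γ k i)
    (hγk : ∀ k : ℕ, 1 ≤ k →
      γ (k + 1) k = θ k * (1 - c * θ (k - 1)) + c * (θ (k - 1) - θ k))
    (hγk1 : ∀ k : ℕ, 1 ≤ k → γ (k + 1) (k + 1) = c * θ k)
    (ξ : ℕ → ℝ)
    (hξ : ∀ k : ℕ, ξ k = ∑ i ∈ Finset.range (k + 1),
      γ k i * (if i = 0 then (1 - θ0) / θ0 ^ 2 else 1 / (θ (i - 1)) ^ 2)) (μ lam : ℝ) (hμ : 0 < μ) (hμlam : μ ≤ lam)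
    (K : ℕ) (hK : K = ⌈(2 * Real.sqrt 3 / θ0) * Real.sqrt (lam / μ) - 2 / θ0⌉₊) :
    1 ≤ K ∧
      (lam ≤ μ * θ0 ^ 2 * ξ K ∧ μ * θ0 ^ 2 * ξ K ≤ 12 * lam) ∧
      (K : ℝ) ≤ 2 * Real.sqrt 3 * Real.sqrt lam / (θ0 * Real.sqrt μ) := by
  have hθ0pos : 0 < θ0 := by rw [hθ0]; positivity
  set a := √(lam / μ)
  have ha : 1 ≤ a := Real.one_le_sqrt.2 ((one_le_div hμ).2 hμlam)
  have hlam : lam = μ * (2 * √3 * a) ^ 2 / 12 := by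
    rw [mul_pow, mul_pow, Real.sq_sqrt zero_le_three, Real.sq_sqrt (div_nonneg (by linarith) hμ.le)]
    field_simp
    ring
  obtain ⟨hK1, hKlow, hKup⟩ :=
    ceil_bounds hθ0pos (by rw [hθ0]; exact div_le_one_of_le₀ hc (by linarith)) ha hK
  obtain ⟨hξlow, hξup⟩ := scaled_xi_mem_Icc hc hθ0 hθinit hθrec hθpos hγ10 hγ11 hγrec hγk hγk1 hξ
    (fun i hi => if_neg (by omega)) hK1
  refine ⟨hK1, ⟨?_, ?_⟩, ?_⟩
  · calc lam = μ * ((2 * √3 * a) ^ 2 / 12) := by rw [hlam]; ring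
      _ ≤ μ * ((θ0 * K + 2) ^ 2 / 12) := by gcongr
      _ ≤ μ * θ0 ^ 2 * ξ K := by rw [mul_assoc]; gcongr
  · calc μ * θ0 ^ 2 * ξ K ≤ μ * (θ0 * K + 1) ^ 2 := by rw [mul_assoc]; gcongr
      _ ≤ μ * (2 * √3 * a) ^ 2 := by gcongr
      _ = 12 * lam := by rw [hlam]; ring
  · have ha' : a = √lam / √μ := Real.sqrt_div' _ hμ.le
    rw [show 2 * √3 * √lam / (θ0 * √μ) = 2 * √3 * a / θ0 by rw [ha']; ring,
      le_div_iff₀ hθ0pos]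
    linarith

theorem stmt_16 (c : ℝ) (hc : 1 ≤ c) (θ0 : ℝ) (hθ0 : θ0 = 1 / c)
    (θ : ℕ → ℝ) (hθinit : θ 0 = θ0)
    (hθrec : ∀ k : ℕ, θ (k + 1) = (Real.sqrt ((θ k) ^ 4 + 4 * (θ k) ^ 2) - (θ k) ^ 2) / 2)
    (hθpos : ∀ k : ℕ, 0 < θ k)
    (γ : ℕ → ℕ → ℝ)
    (hγ00 : γ 0 0 = 1) (hγ10 : γ 1 0 = 0) (hγ11 : γ 1 1 = 1)
    (hγrec : ∀ k : ℕ, 1 ≤ k → ∀ i : ℕ, i ≤ k - 1 → γ (k + 1) i = (1 - θ k) * γ k i)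
    (hγk : ∀ k : ℕ, 1 ≤ k →
      γ (k + 1) k = θ k * (1 - c * θ (k - 1)) + c * (θ (k - 1) - θ k))
    (hγk1 : ∀ k : ℕ, 1 ≤ k → γ (k + 1) (k + 1) = c * θ k)
    (ξ : ℕ → ℝ)
    (hξ : ∀ k : ℕ, ξ k = ∑ i ∈ Finset.range (k + 1),
      γ k i * (if i = 0 then (1 - θ0) / θ0 ^ 2 else 1 / (θ (i - 1)) ^ 2)) (μ lam : ℝ) (hμ : 0 < μ) (hμlam : μ ≤ lam)
    (K : ℕ) (hK : K = ⌈(2 * Real.sqrt 3 / θ0) * Real.sqrt (lam / μ) - 2 / θ0⌉₊) :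
    1 ≤ K ∧
      (lam ≤ μ * θ0 ^ 2 * ξ K ∧ μ * θ0 ^ 2 * ξ K ≤ 12 * lam) ∧
      (K : ℝ) ≤ 2 * Real.sqrt 3 * Real.sqrt lam / (θ0 * Real.sqrt μ) :=
  stmt_16_general c hc θ0 hθ0 θ hθinit hθrec hθpos γ hγ10 hγ11 hγrec hγk hγk1 ξ hξ μ lam hμ hμlam K
    hK
end

section
/- Let θ0 ∈ (0,1], μ > 0, μ_F > 0, λ > 0 and ξ ∈ ℝ with λ ≤ μ·θ0²·ξ and μ·(1−θ0) ≤ λ. Define m(a) = (a·θ0²/(1 + a·(1−θ0)))·(ξ − (1−θ0)/θ0²) for a > 0, and set σ = 1/(1 + m(μ)). Then max(σ, 1 − σ·m(μ_F)) ≤ 1 − min(1, μ_F/μ)·(λ − μ·(1−θ0))/(λ + 1). -/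
/-!
With `δ = 1 - θ0` and `κ = θ0² (ξ - δ / θ0²)` the modulus is `m a = a κ / (1 + a δ)`, and
`λ ≤ μ θ0² ξ` says exactly that `s := λ - μ δ ≤ μ κ`. The choice of `σ` gives `σ = 1 - σ m(μ)`, so
both entries of the maximum are at most `1 - t σ m(μ)` with `t = min 1 (μ_F / μ)`, because `t ≤ 1`
and `t m(μ) ≤ m(μ_F)` (`m` is increasing while `m a / a` is decreasing). Finally
`σ m(μ) = μ κ / (1 + μ δ + μ κ) ≥ s / (1 + μ δ + s) = s / (1 + λ)`.
-/

lemma div_add_le_div_add {s A D : ℝ} (hD : 0 < D) (hs : 0 ≤ s) (hsA : s ≤ A) :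
    s / (D + s) ≤ A / (D + A) := by
  rw [div_le_div_iff₀ (by linarith) (by linarith)]
  nlinarith

lemma min_one_div_mul_le {κ δ a b : ℝ} (hκ : 0 ≤ κ) (hδ : 0 ≤ δ) (ha : 0 < a) (hb : 0 < b) :
    min 1 (b / a) * (a * κ / (1 + a * δ)) ≤ b * κ / (1 + b * δ) := by
  have hDa : 0 < 1 + a * δ := by positivity
  have hDb : 0 < 1 + b * δ := by positivity
  rcases le_total a b with hab | hba
  · calc min 1 (b / a) * (a * κ / (1 + a * δ)) ≤ a * κ / (1 + a * δ) :=
          mul_le_of_le_one_left (by positivity) (min_le_left _ _)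
      _ ≤ b * κ / (1 + b * δ) := by
          rw [div_le_div_iff₀ hDa hDb]
          nlinarith [mul_nonneg hκ (sub_nonneg.mpr hab)]
  · rw [min_eq_right ((div_le_one ha).mpr hba)]
    calc b / a * (a * κ / (1 + a * δ)) = b * κ / (1 + a * δ) := by field_simp
      _ ≤ b * κ / (1 + b * δ) := by gcongr

theorem stmt_17_general (θ0 μ μF lam ξ : ℝ)
    (hθ0pos : 0 < θ0) (hθ0le : θ0 ≤ 1)
    (hμ : 0 < μ) (hμF : 0 < μF)
    (h1 : lam ≤ μ * θ0 ^ 2 * ξ) (h2 : μ * (1 - θ0) ≤ lam)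
    (m : ℝ → ℝ)
    (hm : ∀ a : ℝ, 0 < a →
      m a = (a * θ0 ^ 2 / (1 + a * (1 - θ0))) * (ξ - (1 - θ0) / θ0 ^ 2))
    (σ : ℝ) (hσ : σ = 1 / (1 + m μ)) :
    max σ (1 - σ * m μF) ≤ 1 - min 1 (μF / μ) * (lam - μ * (1 - θ0)) / (lam + 1) := by
  set δ := 1 - θ0
  set κ := θ0 ^ 2 * (ξ - δ / θ0 ^ 2) with hκ_def
  have hδ : 0 ≤ δ := by linarith
  have hm' : ∀ a, 0 < a → m a = a * κ / (1 + a * δ) := fun a ha => by rw [hm a ha]; ring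
  have hs : 0 ≤ lam - μ * δ := by linarith
  have hsκ : lam - μ * δ ≤ μ * κ := by
    have : μ * κ = μ * θ0 ^ 2 * ξ - μ * δ := by rw [hκ_def]; field_simp
    linarith
  have hκ : 0 ≤ κ := nonneg_of_mul_nonneg_right (hs.trans hsκ) hμ
  have hσm : σ * m μ = μ * κ / (1 + μ * δ + μ * κ) := by
    rw [hσ, hm' μ hμ]; field_simp
  have hσ_eq : σ = 1 - σ * m μ := by
    rw [hσ, hm' μ hμ]; field_simp; ring
  have hlow : (lam - μ * δ) / (lam + 1) ≤ σ * m μ := by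
    calc (lam - μ * δ) / (lam + 1) = (lam - μ * δ) / (1 + μ * δ + (lam - μ * δ)) := by ring_nf
      _ ≤ σ * m μ := hσm ▸ div_add_le_div_add (by positivity) hs hsκ
  have hmF : min 1 (μF / μ) * m μ ≤ m μF := by
    rw [hm' μ hμ, hm' μF hμF]; exact min_one_div_mul_le hκ hδ hμ hμF
  set t := min 1 (μF / μ)
  have hσ0 : 0 ≤ σ := by rw [hσ, hm' μ hμ]; positivity
  have hσmμ0 : 0 ≤ σ * m μ := hσm ▸ by positivity
  have hrate : t * ((lam - μ * δ) / (lam + 1)) ≤ t * (σ * m μ) :=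
    mul_le_mul_of_nonneg_left hlow (le_min zero_le_one (by positivity))
  rw [mul_div_assoc]
  apply max_le
  · have : t * (σ * m μ) ≤ σ * m μ := mul_le_of_le_one_left hσmμ0 (min_le_left _ _)
    linarith
  · have : t * (σ * m μ) ≤ σ * m μF := by
      calc t * (σ * m μ) = σ * (t * m μ) := by ring
        _ ≤ σ * m μF := mul_le_mul_of_nonneg_left hmF hσ0
    linarith

theorem stmt_17 (θ0 μ μF lam ξ : ℝ)
    (hθ0pos : 0 < θ0) (hθ0le : θ0 ≤ 1)
    (hμ : 0 < μ) (hμF : 0 < μF) (hlam : 0 < lam)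
    (h1 : lam ≤ μ * θ0 ^ 2 * ξ) (h2 : μ * (1 - θ0) ≤ lam)
    (m : ℝ → ℝ)
    (hm : ∀ a : ℝ, 0 < a →
      m a = (a * θ0 ^ 2 / (1 + a * (1 - θ0))) * (ξ - (1 - θ0) / θ0 ^ 2))
    (σ : ℝ) (hσ : σ = 1 / (1 + m μ)) :
    max σ (1 - σ * m μF) ≤ 1 - min 1 (μF / μ) * (lam - μ * (1 - θ0)) / (lam + 1) :=
  stmt_17_general θ0 μ μF lam ξ hθ0pos hθ0le hμ hμF h1 h2 m hm σ hσ
end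

section
/- Let θ0 ∈ (0,1], μ ∈ (0,1], μ_F > 0, and let D, ε be real numbers with 0 < ε ≤ D. Set r = min(μ_F/μ, 1)·(1 + μ·θ0)/(2 + μ). If k is a real number with k ≥ (1/θ0)·(6√6·max(1/√μ, √μ/μ_F)·log(D/ε) + 2√3·√(1 + 1/μ)), then (1 − r)^{k·θ0·√μ/(2√3·√(1+μ)) − 1}·D ≤ ε, where the power is a real power. -/
/-!
Since `1 - r ≤ exp (-r)`, the power `(1 - r) ^ E` is at most `exp (-r E)`, so it suffices that
`r E ≥ log (D / ε)`. Writing `c = 2√3·√(1 + 1/μ)`, the exponent is `k θ0 / c - 1`, and the bound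
on `k` gives `k θ0 / c - 1 ≥ A log (D / ε) / c` with `A = 6√6·max(1/√μ, √μ/μF)`. It remains to see
`c ≤ r A`: on the one hand `r ≥ min(μF/μ, 1) / 3`, and `max(1/√μ, √μ/μF) · min(μF/μ, 1) ≥ 1/√μ`;
on the other hand `√(1 + 1/μ) ≤ √(2/μ)` because `μ ≤ 1`.
-/

open Real

theorem one_sub_rpow_le_exp_neg_mul {r E : ℝ} (hr : r ≤ 1) (hE : 0 ≤ E) :
    (1 - r) ^ E ≤ exp (-(r * E)) := by
  rw [← neg_mul, exp_mul]
  exact rpow_le_rpow (by linarith) (by linarith [add_one_le_exp (-r)]) hE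

theorem one_sub_rpow_mul_le_of_log_div_le {r E D ε : ℝ} (hr : r ≤ 1) (hE : 0 ≤ E)
    (hD : 0 < D) (hε : 0 < ε) (hlog : log (D / ε) ≤ r * E) :
    (1 - r) ^ E * D ≤ ε :=
  calc (1 - r) ^ E * D ≤ exp (-log (D / ε)) * D := by
        gcongr
        exact (one_sub_rpow_le_exp_neg_mul hr hE).trans (exp_le_exp.mpr (by linarith))
    _ = ε := by
        rw [exp_neg, exp_log (div_pos hD hε)]
        field_simp

theorem one_sub_rpow_div_sub_one_mul_le {r c A x D ε : ℝ} (hr0 : 0 ≤ r) (hr1 : r ≤ 1)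
    (hc : 0 < c) (hcA : c ≤ r * A) (hε : 0 < ε) (hεD : ε ≤ D)
    (hx : A * log (D / ε) + c ≤ x) :
    (1 - r) ^ (x / c - 1) * D ≤ ε := by
  have hL : 0 ≤ log (D / ε) := log_nonneg ((one_le_div hε).mpr hεD)
  have hE : A * log (D / ε) / c ≤ x / c - 1 := by
    rw [le_sub_iff_add_le, div_add_one hc.ne']
    gcongr
  have hA : 0 ≤ A := (pos_of_mul_pos_right (hc.trans_le hcA) hr0).le
  apply one_sub_rpow_mul_le_of_log_div_le hr1 ((by positivity : 0 ≤ A * log (D / ε) / c).trans hE)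
    (hε.trans_le hεD) hε
  calc log (D / ε) ≤ r * A * log (D / ε) / c := by
        rw [le_div_iff₀ hc]; nlinarith
    _ ≤ r * (x / c - 1) := by rw [mul_assoc, mul_div_assoc]; gcongr

theorem inv_sqrt_le_max_mul_min {μ μF : ℝ} (hμ : 0 < μ) (hμF : 0 < μF) :
    1 / √μ ≤ max (1 / √μ) (√μ / μF) * min (μF / μ) 1 := by
  rcases le_total (μF / μ) 1 with h | h
  · have hμsq : √μ / μF * (μF / μ) = 1 / √μ := by
      field_simp
      rw [sq_sqrt hμ.le]
    rw [min_eq_left h, ← hμsq]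
    gcongr
    exact le_max_right _ _
  · rw [min_eq_right h, mul_one]
    exact le_max_left _ _

theorem div_three_le_mul_one_add_mul_div {m μ θ : ℝ} (hm : 0 ≤ m) (hμ0 : 0 ≤ μ) (hμ1 : μ ≤ 1)
    (hθ : 0 ≤ θ) : m / 3 ≤ m * (1 + μ * θ) / (2 + μ) := by
  rw [div_le_div_iff₀ (by norm_num) (by linarith)]
  nlinarith [mul_nonneg hm (mul_nonneg hμ0 hθ)]

theorem mul_one_add_mul_div_le_one {m μ θ : ℝ} (hm0 : 0 ≤ m) (hm1 : m ≤ 1) (hμ : 0 ≤ μ)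
    (hθ1 : θ ≤ 1) : m * (1 + μ * θ) / (2 + μ) ≤ 1 := by
  rw [div_le_one (by linarith)]
  nlinarith [mul_le_mul_of_nonneg_left hθ1 hμ]

theorem sqrt_three_mul_sqrt_one_add_inv_le {μ : ℝ} (hμ0 : 0 < μ) (hμ1 : μ ≤ 1) :
    √3 * √(1 + 1 / μ) ≤ √6 / √μ := by
  rw [← sqrt_mul (by norm_num), ← sqrt_div (by norm_num)]
  gcongr
  rw [le_div_iff₀ hμ0, mul_assoc, add_mul, one_div_mul_cancel hμ0.ne']
  linarith

theorem sqrt_div_sqrt_one_add {μ : ℝ} (hμ : 0 < μ) :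
    √μ / √(1 + μ) = 1 / √(1 + 1 / μ) := by
  rw [show 1 + 1 / μ = (1 + μ) / μ by field_simp; ring, sqrt_div (by linarith), one_div_div]

theorem stmt_19 (θ0 μ μF D ε : ℝ)
    (hθ0pos : 0 < θ0) (hθ0le : θ0 ≤ 1)
    (hμ0 : 0 < μ) (hμ1 : μ ≤ 1) (hμF : 0 < μF)
    (hε : 0 < ε) (hεD : ε ≤ D)
    (r : ℝ) (hr : r = min (μF / μ) 1 * (1 + μ * θ0) / (2 + μ))
    (k : ℝ)
    (hk : k ≥ (1 / θ0) * (6 * Real.sqrt 6 * max (1 / Real.sqrt μ) (Real.sqrt μ / μF)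
        * Real.log (D / ε) + 2 * Real.sqrt 3 * Real.sqrt (1 + 1 / μ))) :
    (1 - r) ^ (k * θ0 * Real.sqrt μ / (2 * Real.sqrt 3 * Real.sqrt (1 + μ)) - 1) * D
      ≤ ε := by
  set M := max (1 / √μ) (√μ / μF)
  set m := min (μF / μ) 1
  have hm0 : 0 ≤ m := le_min (by positivity) zero_le_one
  have hr3 : m / 3 ≤ r := hr ▸ div_three_le_mul_one_add_mul_div hm0 hμ0.le hμ1 hθ0pos.le
  have hr1 : r ≤ 1 :=
    hr ▸ mul_one_add_mul_div_le_one hm0 (min_le_right _ _) hμ0.le hθ0le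
  have hc : 2 * √3 * √(1 + 1 / μ) ≤ r * (6 * √6 * M) :=
    calc 2 * √3 * √(1 + 1 / μ) ≤ 2 * (√6 / √μ) := by
          rw [mul_assoc]; gcongr; exact sqrt_three_mul_sqrt_one_add_inv_le hμ0 hμ1
      _ = 2 * √6 * (1 / √μ) := by ring
      _ ≤ 2 * √6 * (M * m) := by gcongr; exact inv_sqrt_le_max_mul_min hμ0 hμF
      _ ≤ r * (6 * √6 * M) := by
          nlinarith [mul_le_mul_of_nonneg_right hr3 (by positivity : 0 ≤ 6 * √6 * M)]
  have hexp : k * θ0 * √μ / (2 * √3 * √(1 + μ)) = k * θ0 / (2 * √3 * √(1 + 1 / μ)) := by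
    rw [mul_div_assoc, mul_div_assoc, mul_comm (2 * √3), ← div_div, sqrt_div_sqrt_one_add hμ0]
    field_simp
  rw [hexp]
  refine one_sub_rpow_div_sub_one_mul_le ((by positivity : 0 ≤ m / 3).trans hr3) hr1
    (by positivity) hc hε hεD ?_
  rwa [ge_iff_le, one_div_mul_eq_div, div_le_iff₀ hθ0pos] at hk
end
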